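/- arXiv:2302.01377 — 5 statements merged into one kernel-verified Lean document; each statement's English description precedes it below -/
import Mathlib

section
/- Suppose there exists γ ∈ (0,1/k] with Σ_{a∈K} max(δ_a, γ·τ) ≤ τ. Then E[r^PICO] ≥ E[r^OPT] − k·τ. -/
open scoped BigOperators Classical

namespace ExposureBandits

/-- Number of pulls of arm `a` in the (0-indexed) phase `j` of the pull sequence `pull`. -/
def pullsInPhase {k : ℕ} (T τ : ℕ) (pull : Fin T → Fin k) (j : ℕ) (a : Fin k) : ℕ :=
  (Finset.univ.filter (fun t : Fin T =>
    j * τ ≤ (t : ℕ) ∧ (t : ℕ) < (j + 1) * τ ∧ pull t = a)).card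

/-- Arm `a` is available at round `t` iff its exposure constraint was satisfied in every
completed phase. -/
def availableAt {k : ℕ} (T τ : ℕ) (δ : Fin k → ℕ) (pull : Fin T → Fin k)
    (t : Fin T) (a : Fin k) : Prop :=
  ∀ j : ℕ, (j + 1) * τ ≤ (t : ℕ) → δ a ≤ pullsInPhase T τ pull j a

/-- Conditional-expected reward of the pull sequence `pull` on the arrival sequence `q`:
pulls of unavailable (departed) arms yield zero utility. -/
noncomputable def seqReward {k n : ℕ} (T τ : ℕ) (μ : Fin n → Fin k → ℝ) (δ : Fin k → ℕ)
    (pull : Fin T → Fin k) (q : Fin T → Fin n) : ℝ :=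
  ∑ t : Fin T, if availableAt T τ δ pull t (pull t) then μ (q t) (pull t) else 0

/-- A deterministic online algorithm for the stochastic-optimization task: the arm pulled at
round `t` may depend only on the types observed in rounds `1,…,t`. -/
def Causal {k n T : ℕ} (f : (Fin T → Fin n) → Fin T → Fin k) : Prop :=
  ∀ q q' : Fin T → Fin n, ∀ t : Fin T,
    (∀ s : Fin T, s ≤ t → q s = q' s) → f q t = f q' t

abbrev Alg (k n T : ℕ) := {f : (Fin T → Fin n) → Fin T → Fin k // Causal f}

/-- Probability of the i.i.d. arrival sequence `q` under the arrival distribution `P`. -/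
noncomputable def seqProb {n : ℕ} (T : ℕ) (P : Fin n → ℝ) (q : Fin T → Fin n) : ℝ :=
  ∏ t : Fin T, P (q t)

/-- Expected reward of the algorithm `A`. -/
noncomputable def expReward {k n : ℕ} (T τ : ℕ) (P : Fin n → ℝ) (μ : Fin n → Fin k → ℝ)
    (δ : Fin k → ℕ) (A : Alg k n T) : ℝ :=
  ∑ q : Fin T → Fin n, seqProb T P q * seqReward T τ μ δ (A.1 q) q

/-- The optimal expected reward: the value of the benchmark `OPT`. -/
noncomputable def optReward (k n T τ : ℕ) (P : Fin n → ℝ) (μ : Fin n → Fin k → ℝ)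
    (δ : Fin k → ℕ) : ℝ :=
  ⨆ A : Alg k n T, expReward T τ P μ δ A

/-- Property 1 (phase independence): whenever the type prefixes of two phases agree, the
algorithm's pulls at the corresponding rounds agree. -/
def PhaseInd {k n T : ℕ} (τ : ℕ) (A : Alg k n T) : Prop :=
  ∀ q : Fin T → Fin n, ∀ i j s : ℕ, s < τ →
    ∀ (hi : i * τ + s < T) (hj : j * τ + s < T),
      (∀ l : ℕ, l ≤ s → ∀ (hli : i * τ + l < T) (hlj : j * τ + l < T),
          q ⟨i * τ + l, hli⟩ = q ⟨j * τ + l, hlj⟩) →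
      A.1 q ⟨i * τ + s, hi⟩ = A.1 q ⟨j * τ + s, hj⟩

/-- Property 2 (commitment to `Z`): the algorithm pulls only arms of `Z` and, with
probability 1, every arm of `Z` receives at least its exposure threshold in every phase. -/
def Committed {k n T : ℕ} (τ : ℕ) (δ : Fin k → ℕ) (Z : Finset (Fin k)) (A : Alg k n T) : Prop :=
  ∀ q : Fin T → Fin n,
    (∀ t : Fin T, A.1 q t ∈ Z) ∧
    (∀ j : ℕ, (j + 1) * τ ≤ T → ∀ a ∈ Z, δ a ≤ pullsInPhase T τ (A.1 q) j a)

/-- The value of `PICO`: the best expected reward among phase-independent algorithms committed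
to some subset of the arms. -/
noncomputable def picoReward (k n T τ : ℕ) (P : Fin n → ℝ) (μ : Fin n → Fin k → ℝ)
    (δ : Fin k → ℕ) : ℝ :=
  ⨆ A : {A : Alg k n T // PhaseInd τ A ∧ ∃ Z : Finset (Fin k), Committed τ δ Z A},
    expReward T τ P μ δ A.1

/-!
Let `V` be the largest `committedValue`: the expected reward of a single phase played by a
causal policy that is paid only for pulls of a set `Z` of arms, and only if every arm of `Z`
meets its quota. An arm that misses its quota departs for good, so any algorithm has at most `k`
phases in which an arm present misses its quota, each worth at most `τ`; conditionally on the
other phases every remaining phase is such a committed policy, worth at most `V`. Hence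
`OPT ≤ N V + k τ`. Conversely, since `∑ a ∈ Z, δ a ≤ τ`, a causal policy can be repaired online
into one that always meets the quotas of `Z` and keeps every pull into `Z` of the original on the
phases where the original meets them. Running the repaired optimal policy afresh in every phase
is phase-independent, committed to `Z`, and earns at least `N V`.
-/

open Finset

section ProductWeights

variable {ι α : Type*} [Fintype ι] [DecidableEq ι] [Fintype α] {p : α → ℝ}

theorem sum_prod_eq_one (hp : ∑ a, p a = 1) : ∑ x : ι → α, ∏ i, p (x i) = 1 := by
  rw [← Fintype.piFinset_univ, ← prod_univ_sum (fun _ => univ) (fun _ => p), hp,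
    prod_const_one]

/-- Resampling one coordinate of an i.i.d. vector does not change expectations. -/
theorem sum_prod_mul_eq_sum_prod_mul_sum_update (hp : ∑ a, p a = 1) (j : ι)
    (f : (ι → α) → ℝ) :
    ∑ x : ι → α, (∏ i, p (x i)) * f x =
      ∑ x : ι → α, (∏ i, p (x i)) * ∑ a, p a * f (Function.update x j a) := by
  have hweight : ∀ (x : ι → α) (a : α),
      (∏ i, p (x i)) * p a = (∏ i, p (Function.update x j a i)) * p (x j) := by
    intro x a
    have hrest : ∏ i ∈ univ.erase j, p (Function.update x j a i) = ∏ i ∈ univ.erase j, p (x i) :=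
      prod_congr rfl fun i hi => by rw [Function.update_of_ne (ne_of_mem_erase hi)]
    rw [← mul_prod_erase univ _ (mem_univ j), ← mul_prod_erase univ _ (mem_univ j),
      Function.update_self, hrest]
    ring
  have hswap : Function.Involutive fun xa : (ι → α) × α => (Function.update xa.1 j xa.2, xa.1 j) :=
    fun ⟨x, a⟩ => Prod.ext (by simp) (by simp)
  calc ∑ x : ι → α, (∏ i, p (x i)) * f x
      = ∑ xa : (ι → α) × α, (∏ i, p (xa.1 i)) * p xa.2 * f xa.1 := by
        rw [Fintype.sum_prod_type]
        refine sum_congr rfl fun x _ => ?_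
        simp only [mul_right_comm _ _ (f x), ← mul_sum, hp, mul_one]
    _ = ∑ xa : (ι → α) × α, (∏ i, p (xa.1 i)) * (p xa.2 * f (Function.update xa.1 j xa.2)) :=
        Fintype.sum_bijective _ hswap.bijective _ _ fun ⟨x, a⟩ => by
          dsimp only
          rw [Function.update_idem, Function.update_eq_self, ← mul_assoc, ← hweight]
    _ = _ := by
        rw [Fintype.sum_prod_type]
        exact sum_congr rfl fun x _ => by rw [mul_sum]

theorem sum_prod_mul_apply_eq (hp : ∑ a, p a = 1) (j : ι) (g : α → ℝ) :
    ∑ x : ι → α, (∏ i, p (x i)) * g (x j) = ∑ a, p a * g a := by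
  rw [sum_prod_mul_eq_sum_prod_mul_sum_update hp j]
  simp only [Function.update_self]
  rw [← sum_mul, sum_prod_eq_one hp, one_mul]

end ProductWeights

section Repair

variable {α : Type*} [DecidableEq α] (τ : ℕ) (δ : α → ℕ) (Z : Finset α) (z₀ : α)

def quotaDeficit (c : List α) : ℕ :=
  ∑ a ∈ Z, (δ a - c.count a)

/-- `c` is the output so far, latest first; the proposed arm `b` is kept if afterwards all
quotas of `Z` can still be met within `τ` rounds. -/
noncomputable def repairStep (c : List α) (b : α) : α :=
  if b ∈ Z ∧ quotaDeficit δ Z (b :: c) + (c.length + 1) ≤ τ then b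
  else if h : ∃ a ∈ Z, c.count a < δ a then h.choose else z₀

noncomputable def repairHist (b : ℕ → α) : ℕ → List α
  | 0 => []
  | s + 1 => repairStep τ δ Z z₀ (repairHist b s) (b s) :: repairHist b s

noncomputable def repairSeq (b : ℕ → α) (s : ℕ) : α :=
  repairStep τ δ Z z₀ (repairHist τ δ Z z₀ b s) (b s)

variable {τ δ Z z₀}

theorem quotaDeficit_cons_le (x : α) (c : List α) :
    quotaDeficit δ Z (x :: c) ≤ quotaDeficit δ Z c :=
  sum_le_sum fun _ _ => Nat.sub_le_sub_left (List.count_le_count_cons ..) _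

theorem quotaDeficit_cons_add_one {x : α} {c : List α} (hx : x ∈ Z) (hc : c.count x < δ x) :
    quotaDeficit δ Z (x :: c) + 1 = quotaDeficit δ Z c := by
  unfold quotaDeficit
  rw [← add_sum_erase Z _ hx, ← add_sum_erase Z _ hx, List.count_cons_self,
    sum_congr rfl fun a ha => by rw [List.count_cons_of_ne (ne_of_mem_erase ha).symm]]
  omega

theorem quotaDeficit_eq_zero_iff {c : List α} :
    quotaDeficit δ Z c = 0 ↔ ∀ a ∈ Z, δ a ≤ c.count a := by
  simp only [quotaDeficit, sum_eq_zero_iff, Nat.sub_eq_zero_iff_le]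

theorem length_repairHist (b : ℕ → α) (s : ℕ) : (repairHist τ δ Z z₀ b s).length = s := by
  induction s with
  | zero => rfl
  | succ s ih => simp [repairHist, ih]

theorem count_repairHist (b : ℕ → α) (s : ℕ) (a : α) :
    (repairHist τ δ Z z₀ b s).count a = Nat.count (repairSeq τ δ Z z₀ b · = a) s := by
  induction s with
  | zero => rfl
  | succ s ih =>
    change (repairSeq τ δ Z z₀ b s :: repairHist τ δ Z z₀ b s).count a = _
    rw [List.count_cons, ih, Nat.count_succ]
    simp only [beq_iff_eq]

theorem repairStep_mem (hz₀ : z₀ ∈ Z) (c : List α) (b : α) : repairStep τ δ Z z₀ c b ∈ Z := by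
  unfold repairStep
  split_ifs with hb hc
  exacts [hb.1, hc.choose_spec.1, hz₀]

theorem repairSeq_mem (hz₀ : z₀ ∈ Z) (b : ℕ → α) (s : ℕ) : repairSeq τ δ Z z₀ b s ∈ Z :=
  repairStep_mem hz₀ _ _

/-- The invariant of the repair: the remaining quotas fit into the remaining rounds. -/
theorem quotaDeficit_repairHist_add_le (hZ : ∑ a ∈ Z, δ a ≤ τ) (b : ℕ → α) {s : ℕ}
    (hs : s ≤ τ) : quotaDeficit δ Z (repairHist τ δ Z z₀ b s) + s ≤ τ := by
  induction s with
  | zero => simpa [repairHist, quotaDeficit] using hZ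
  | succ s ih =>
    have ih := ih (by omega)
    set c := repairHist τ δ Z z₀ b s
    have hlen : c.length = s := length_repairHist b s
    change quotaDeficit δ Z (repairStep τ δ Z z₀ c (b s) :: c) + (s + 1) ≤ τ
    unfold repairStep
    split_ifs with hb hc
    · rw [hlen] at hb; exact hb.2
    · have := quotaDeficit_cons_add_one hc.choose_spec.1 hc.choose_spec.2
      omega
    · push Not at hc
      have h0 : quotaDeficit δ Z c = 0 := quotaDeficit_eq_zero_iff.2 hc
      have := quotaDeficit_cons_le (δ := δ) (Z := Z) z₀ c
      omega

theorem le_count_repairSeq (hZ : ∑ a ∈ Z, δ a ≤ τ) (b : ℕ → α) :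
    ∀ a ∈ Z, δ a ≤ Nat.count (repairSeq τ δ Z z₀ b · = a) τ := by
  have h := quotaDeficit_repairHist_add_le (z₀ := z₀) hZ b le_rfl
  simp_rw [← count_repairHist]
  exact quotaDeficit_eq_zero_iff.1 (by omega)

theorem sum_count_le (f : ℕ → α) (m : ℕ) : ∑ a ∈ Z, Nat.count (f · = a) m ≤ m := by
  induction m with
  | zero => simp
  | succ m ih =>
    simp only [Nat.count_succ, sum_add_distrib, sum_ite_eq]
    split_ifs <;> omega

/-- The quotas left after following `b s` are covered by the pulls of `b` after round `s`. -/
theorem repairSeq_eq_of_count_le {b : ℕ → α} (hb : ∀ a ∈ Z, δ a ≤ Nat.count (b · = a) τ)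
    {s : ℕ} (hs : s < τ) (hbs : b s ∈ Z)
    (hdom : ∀ a ∈ Z, Nat.count (b · = a) s ≤ (repairHist τ δ Z z₀ b s).count a) :
    repairSeq τ δ Z z₀ b s = b s := by
  set c := repairHist τ δ Z z₀ b s
  have hlen : c.length = s := length_repairHist b s
  have hfit : quotaDeficit δ Z (b s :: c) + (c.length + 1) ≤ τ := by
    have hsplit : ∀ a ∈ Z, δ a - (b s :: c).count a ≤
        Nat.count (fun i => b (s + 1 + i) = a) (τ - (s + 1)) := by
      intro a ha
      have htot := Nat.count_add (b · = a) (s + 1) (τ - (s + 1))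
      rw [Nat.add_sub_cancel' hs, Nat.count_succ] at htot
      have := hb a ha
      have := hdom a ha
      simp only [List.count_cons, beq_iff_eq]
      split_ifs at htot ⊢ <;> omega
    have := (sum_le_sum hsplit).trans (sum_count_le (Z := Z) (fun i => b (s + 1 + i)) _)
    unfold quotaDeficit
    omega
  unfold repairSeq repairStep
  rw [if_pos ⟨hbs, hfit⟩]

theorem count_le_count_repairHist {b : ℕ → α} (hb : ∀ a ∈ Z, δ a ≤ Nat.count (b · = a) τ)
    {s : ℕ} (hs : s ≤ τ) :
    ∀ a ∈ Z, Nat.count (b · = a) s ≤ (repairHist τ δ Z z₀ b s).count a := by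
  induction s with
  | zero => simp
  | succ s ih =>
    intro a ha
    have ih := ih (by omega)
    change Nat.count (b · = a) (s + 1) ≤ (repairSeq τ δ Z z₀ b s :: repairHist τ δ Z z₀ b s).count a
    simp only [Nat.count_succ, List.count_cons, beq_iff_eq]
    have := ih a ha
    by_cases hbs : b s ∈ Z
    · rw [repairSeq_eq_of_count_le hb (by omega) hbs ih]
      omega
    · have hne : b s ≠ a := fun h => hbs (h ▸ ha)
      rw [if_neg hne]
      omega

theorem repairSeq_eq_self {b : ℕ → α} (hb : ∀ a ∈ Z, δ a ≤ Nat.count (b · = a) τ)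
    {s : ℕ} (hs : s < τ) (hbs : b s ∈ Z) : repairSeq τ δ Z z₀ b s = b s :=
  repairSeq_eq_of_count_le hb hs hbs (count_le_count_repairHist hb hs.le)

theorem repairHist_congr {b b' : ℕ → α} {s : ℕ} (h : ∀ i < s, b i = b' i) :
    repairHist τ δ Z z₀ b s = repairHist τ δ Z z₀ b' s := by
  induction s with
  | zero => rfl
  | succ s ih =>
    simp only [repairHist, ih fun i hi => h i (by omega), h s (by omega)]

theorem repairSeq_congr {b b' : ℕ → α} {s : ℕ} (h : ∀ i ≤ s, b i = b' i) :
    repairSeq τ δ Z z₀ b s = repairSeq τ δ Z z₀ b' s := by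
  rw [repairSeq, repairSeq, repairHist_congr fun i hi => h i hi.le, h s le_rfl]

end Repair

def MeetsQuotas {ι α : Type*} [Fintype ι] [DecidableEq α] (δ : α → ℕ) (Z : Finset α)
    (p : ι → α) : Prop :=
  ∀ a ∈ Z, δ a ≤ #{s | p s = a}

theorem card_filter_fin_eq_count (P : ℕ → Prop) [DecidablePred P] (τ : ℕ) :
    #{s : Fin τ | P s} = Nat.count P τ := by
  rw [Nat.count_eq_card_filter_range, card_filter, card_filter,
    Fin.sum_univ_eq_sum_range (fun i => if P i then 1 else 0)]

section RepairFin

variable {α : Type*} [DecidableEq α]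

noncomputable def repair (τ : ℕ) (δ : α → ℕ) (Z : Finset α) (z₀ : α) (p : Fin τ → α) :
    Fin τ → α :=
  fun s => repairSeq τ δ Z z₀ (fun i => if h : i < τ then p ⟨i, h⟩ else z₀) s

variable {τ : ℕ} {δ : α → ℕ} {Z : Finset α} {z₀ : α}

theorem repair_mem (hz₀ : z₀ ∈ Z) (p : Fin τ → α) (s : Fin τ) : repair τ δ Z z₀ p s ∈ Z :=
  repairSeq_mem hz₀ _ _

theorem meetsQuotas_repair (hZ : ∑ a ∈ Z, δ a ≤ τ) (p : Fin τ → α) :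
    MeetsQuotas δ Z (repair τ δ Z z₀ p) := fun a ha =>
  (card_filter_fin_eq_count (repairSeq τ δ Z z₀ _ · = a) τ).symm ▸ le_count_repairSeq hZ _ a ha

theorem repair_eq_self {p : Fin τ → α} (hp : MeetsQuotas δ Z p) {s : Fin τ} (hps : p s ∈ Z) :
    repair τ δ Z z₀ p s = p s := by
  set b : ℕ → α := fun i => if h : i < τ then p ⟨i, h⟩ else z₀
  have hb : ∀ s : Fin τ, b s = p s := fun s => dif_pos s.2
  have hcount : ∀ a ∈ Z, δ a ≤ Nat.count (b · = a) τ := fun a ha => by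
    rw [← card_filter_fin_eq_count]
    simpa only [hb] using hp a ha
  rw [← hb s] at hps ⊢
  exact repairSeq_eq_self hcount s.2 hps

theorem repair_congr {p p' : Fin τ → α} {s : Fin τ} (h : ∀ s' ≤ s, p s' = p' s') :
    repair τ δ Z z₀ p s = repair τ δ Z z₀ p' s :=
  repairSeq_congr fun i hi => by
    have hiτ : i < τ := lt_of_le_of_lt hi s.2
    simp only [dif_pos hiτ]
    exact h ⟨i, hiτ⟩ hi

end RepairFin

theorem add_mul_lt_mul_iff {τ s i j : ℕ} (hs : s < τ) : s + τ * i < τ * j ↔ i < j := by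
  refine ⟨fun h => Nat.lt_of_mul_lt_mul_left (a := τ) (by omega), fun h => ?_⟩
  have : τ * (i + 1) ≤ τ * j := Nat.mul_le_mul_left τ h
  rw [mul_add_one] at this
  omega

section Phases

variable {β : Type*} {N τ : ℕ}

/-- `finProdFinEquiv (j, s)` is round `s + τ * j`, i.e. round `s` of phase `j`. -/
def splitPhases : (Fin (N * τ) → β) ≃ (Fin N → Fin τ → β) where
  toFun q j s := q (finProdFinEquiv (j, s))
  invFun Q t := Q (finProdFinEquiv.symm t).1 (finProdFinEquiv.symm t).2
  left_inv q := by ext t; simp only [Prod.mk.eta, Equiv.apply_symm_apply]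
  right_inv Q := by ext j s; simp only [Equiv.symm_apply_apply]

@[simp]
theorem splitPhases_apply (q : Fin (N * τ) → β) (j : Fin N) (s : Fin τ) :
    splitPhases q j s = q (finProdFinEquiv (j, s)) := rfl

@[simp]
theorem splitPhases_symm_apply (Q : Fin N → Fin τ → β) (j : Fin N) (s : Fin τ) :
    splitPhases.symm Q (finProdFinEquiv (j, s)) = Q j s := by
  simp only [splitPhases, Equiv.coe_fn_symm_mk, Equiv.symm_apply_apply]

theorem splitPhases_symm_update_of_lt [DecidableEq (Fin N)] (Q : Fin N → Fin τ → β) {j : Fin N}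
    (w : Fin τ → β) {t : Fin (N * τ)} (ht : (t : ℕ) < τ * j) :
    splitPhases.symm (Function.update Q j w) t = splitPhases.symm Q t := by
  obtain ⟨⟨i, s⟩, rfl⟩ := finProdFinEquiv.surjective t
  simp only [finProdFinEquiv_apply_val] at ht
  rw [add_mul_lt_mul_iff s.2] at ht
  simp [Function.update_of_ne (show i < j from ht).ne]

theorem splitPhases_symm_update_eq_of_le [DecidableEq (Fin N)] (Q : Fin N → Fin τ → β)
    {j : Fin N} {s : Fin τ} {w w' : Fin τ → β} (hw : ∀ s' ≤ s, w s' = w' s')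
    {t : Fin (N * τ)} (ht : t ≤ finProdFinEquiv (j, s)) :
    splitPhases.symm (Function.update Q j w) t = splitPhases.symm (Function.update Q j w') t := by
  by_cases hlt : (t : ℕ) < τ * j
  · rw [splitPhases_symm_update_of_lt Q w hlt, splitPhases_symm_update_of_lt Q w' hlt]
  obtain ⟨⟨i, s'⟩, rfl⟩ := finProdFinEquiv.surjective t
  rw [Fin.le_def] at ht
  simp only [finProdFinEquiv_apply_val] at ht hlt
  rw [add_mul_lt_mul_iff s'.2, not_lt] at hlt
  have hij : i ≤ j := Nat.lt_succ_iff.1 <| (add_mul_lt_mul_iff (j := j + 1) s'.2).1 <| by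
    rw [mul_add_one]
    omega
  obtain rfl : i = j := Fin.ext (le_antisymm hij hlt)
  simpa using hw s' (by rw [Fin.le_def]; omega)

end Phases

theorem card_filter_range_ne_add_card_le {α : Type*} [DecidableEq α] {S : ℕ → Finset α}
    (hS : Antitone S) (m : ℕ) : #{j ∈ range m | S (j + 1) ≠ S j} + #(S m) ≤ #(S 0) := by
  induction m with
  | zero => simp
  | succ m ih =>
    rw [range_add_one, filter_insert]
    split_ifs with hne
    · have hlt : #(S (m + 1)) < #(S m) :=
        card_lt_card ((hS m.le_succ).lt_of_ne hne)
      rw [card_insert_of_notMem (by simp)]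
      omega
    · push Not at hne
      rw [hne]
      exact ih

section Exposure

variable {k N τ T : ℕ} {δ : Fin k → ℕ}

def aliveSet (T τ : ℕ) (δ : Fin k → ℕ) (p : Fin T → Fin k) (j : ℕ) : Finset (Fin k) :=
  {a | ∀ i < j, δ a ≤ pullsInPhase T τ p i a}

theorem mem_aliveSet {p : Fin T → Fin k} {j : ℕ} {a : Fin k} :
    a ∈ aliveSet T τ δ p j ↔ ∀ i < j, δ a ≤ pullsInPhase T τ p i a := by
  simp [aliveSet]

theorem aliveSet_antitone (p : Fin T → Fin k) : Antitone (aliveSet T τ δ p) :=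
  fun _ _ hjj' _ ha => mem_aliveSet.2 fun i hi => mem_aliveSet.1 ha i (hi.trans_le hjj')

theorem aliveSet_congr {p p' : Fin T → Fin k} {j : ℕ}
    (h : ∀ t : Fin T, (t : ℕ) < τ * j → p t = p' t) :
    aliveSet T τ δ p j = aliveSet T τ δ p' j := by
  have hpulls : ∀ i < j, ∀ a, pullsInPhase T τ p i a = pullsInPhase T τ p' i a := by
    intro i hi a
    unfold pullsInPhase
    congr 1
    refine filter_congr fun t _ => and_congr_right fun _ => and_congr_right fun ht => ?_
    have : (i + 1) * τ ≤ τ * j := by rw [mul_comm]; exact Nat.mul_le_mul_left τ hi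
    rw [h t (by omega)]
  ext a
  simp only [mem_aliveSet]
  exact forall₂_congr fun i hi => by rw [hpulls i hi]

theorem pullsInPhase_eq_card (p : Fin (N * τ) → Fin k) (j : Fin N) (a : Fin k) :
    pullsInPhase (N * τ) τ p j a = #{s | splitPhases p j s = a} := by
  symm
  refine card_nbij (fun s => finProdFinEquiv (j, s)) (fun s hs => ?_)
    (fun s _ s' _ h => by simpa using h) (fun t ht => ?_)
  · simp only [mem_coe, mem_filter, mem_univ, true_and, finProdFinEquiv_apply_val,
      mul_comm _ τ]
    exact ⟨by omega, (add_mul_lt_mul_iff s.2).2 j.val.lt_succ_self, (mem_filter.1 hs).2⟩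
  · obtain ⟨⟨i, s⟩, rfl⟩ := finProdFinEquiv.surjective t
    simp only [mem_coe, mem_filter, mem_univ, true_and, finProdFinEquiv_apply_val,
      mul_comm _ τ] at ht
    obtain ⟨hji, hij, hpa⟩ := ht
    rw [← not_lt, add_mul_lt_mul_iff s.2, not_lt] at hji
    rw [add_mul_lt_mul_iff s.2, Nat.lt_succ_iff] at hij
    obtain rfl : i = j := Fin.ext (le_antisymm hij hji)
    exact ⟨s, mem_filter.2 ⟨mem_univ _, hpa⟩, rfl⟩

theorem availableAt_iff_mem_aliveSet (p : Fin (N * τ) → Fin k) (j : Fin N) (s : Fin τ)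
    (a : Fin k) :
    availableAt (N * τ) τ δ p (finProdFinEquiv (j, s)) a ↔ a ∈ aliveSet (N * τ) τ δ p j := by
  simp only [mem_aliveSet, availableAt, finProdFinEquiv_apply_val]
  refine forall_congr' fun i => imp_congr_left ?_
  rw [mul_comm _ τ, ← not_lt, add_mul_lt_mul_iff s.2, not_lt, Nat.succ_le_iff]

theorem meetsQuotas_of_aliveSet_succ_eq {p : Fin (N * τ) → Fin k} {j : Fin N}
    (h : aliveSet (N * τ) τ δ p (j + 1) = aliveSet (N * τ) τ δ p j) :
    MeetsQuotas δ (aliveSet (N * τ) τ δ p j) (splitPhases p j) := by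
  intro a ha
  rw [← h, mem_aliveSet] at ha
  rw [← pullsInPhase_eq_card]
  exact ha j (Nat.lt_succ_self _)

theorem card_filter_aliveSet_ne_le (p : Fin T → Fin k) (m : ℕ) :
    #{j ∈ range m | aliveSet T τ δ p (j + 1) ≠ aliveSet T τ δ p j} ≤ k := by
  have := card_filter_range_ne_add_card_le (aliveSet_antitone (τ := τ) (δ := δ) p) m
  have := card_le_univ (aliveSet T τ δ p 0)
  simp only [Fintype.card_fin] at this
  omega

end Exposure

section Rewards

variable {k n N τ : ℕ} {P : Fin n → ℝ} {μ : Fin n → Fin k → ℝ} {δ : Fin k → ℕ}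

def phaseReward (μ : Fin n → Fin k → ℝ) (Z : Finset (Fin k)) (w : Fin τ → Fin n)
    (p : Fin τ → Fin k) : ℝ :=
  ∑ s, if p s ∈ Z then μ (w s) (p s) else 0

noncomputable def committedReward (δ : Fin k → ℕ) (μ : Fin n → Fin k → ℝ) (Z : Finset (Fin k))
    (w : Fin τ → Fin n) (p : Fin τ → Fin k) : ℝ :=
  if MeetsQuotas δ Z p then phaseReward μ Z w p else 0

noncomputable def committedValue (τ : ℕ) (P : Fin n → ℝ) (μ : Fin n → Fin k → ℝ)
    (δ : Fin k → ℕ) (Z : Finset (Fin k)) (π : (Fin τ → Fin n) → Fin τ → Fin k) : ℝ :=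
  ∑ w, seqProb τ P w * committedReward δ μ Z w (π w)

theorem seqProb_nonneg (hP : ∀ u, 0 ≤ P u) (T : ℕ) (q : Fin T → Fin n) : 0 ≤ seqProb T P q :=
  prod_nonneg fun t _ => hP (q t)

theorem phaseReward_nonneg (hμ : ∀ u a, 0 ≤ μ u a) (Z : Finset (Fin k)) (w : Fin τ → Fin n)
    (p : Fin τ → Fin k) : 0 ≤ phaseReward μ Z w p :=
  sum_nonneg fun s _ => by split_ifs <;> simp [hμ]

theorem phaseReward_le (hμ : ∀ u a, μ u a ≤ 1) (Z : Finset (Fin k)) (w : Fin τ → Fin n)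
    (p : Fin τ → Fin k) : phaseReward μ Z w p ≤ τ :=
  (sum_le_sum fun s _ => show _ ≤ (1 : ℝ) by split_ifs <;> simp [hμ]).trans (by simp)

theorem committedReward_nonneg (hμ : ∀ u a, 0 ≤ μ u a) (Z : Finset (Fin k))
    (w : Fin τ → Fin n) (p : Fin τ → Fin k) : 0 ≤ committedReward δ μ Z w p := by
  unfold committedReward
  split_ifs
  exacts [phaseReward_nonneg hμ Z w p, le_rfl]

theorem committedValue_nonneg (hP : ∀ u, 0 ≤ P u) (hμ : ∀ u a, 0 ≤ μ u a) (Z : Finset (Fin k))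
    (π : (Fin τ → Fin n) → Fin τ → Fin k) : 0 ≤ committedValue τ P μ δ Z π :=
  sum_nonneg fun w _ => mul_nonneg (seqProb_nonneg hP τ w) (committedReward_nonneg hμ Z w _)

theorem committedValue_empty (π : (Fin τ → Fin n) → Fin τ → Fin k) :
    committedValue τ P μ δ ∅ π = 0 := by
  simp [committedValue, committedReward, phaseReward]

theorem seqReward_eq_sum_phaseReward (p : Fin (N * τ) → Fin k) (q : Fin (N * τ) → Fin n) :
    seqReward (N * τ) τ μ δ p q =
      ∑ j : Fin N,
        phaseReward μ (aliveSet (N * τ) τ δ p j) (splitPhases q j) (splitPhases p j) := by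
  rw [seqReward, ← finProdFinEquiv.sum_comp, Fintype.sum_prod_type]
  refine sum_congr rfl fun j _ => sum_congr rfl fun s _ => ?_
  exact if_congr (availableAt_iff_mem_aliveSet p j s _) rfl rfl

/-- Phases after which no arm departs meet the quotas of the arms present; at most `k` phases
are followed by a departure. -/
theorem seqReward_le (hμ : ∀ u a, 0 ≤ μ u a ∧ μ u a ≤ 1) (p : Fin (N * τ) → Fin k)
    (q : Fin (N * τ) → Fin n) :
    seqReward (N * τ) τ μ δ p q ≤
      ∑ j : Fin N,
        committedReward δ μ (aliveSet (N * τ) τ δ p j) (splitPhases q j) (splitPhases p j) +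
          k * τ := by
  set S := aliveSet (N * τ) τ δ p
  have hphase : ∀ j : Fin N, phaseReward μ (S j) (splitPhases q j) (splitPhases p j) ≤
      committedReward δ μ (S j) (splitPhases q j) (splitPhases p j) +
        if S (j + 1) ≠ S j then (τ : ℝ) else 0 := by
    intro j
    split_ifs with hne
    · exact (phaseReward_le (fun u a => (hμ u a).2) _ _ _).trans
        (le_add_of_nonneg_left (committedReward_nonneg (fun u a => (hμ u a).1) _ _ _))
    · push Not at hne
      rw [committedReward, if_pos (meetsQuotas_of_aliveSet_succ_eq hne), add_zero]
  have hdepart : ∑ j : Fin N, (if S (j + 1) ≠ S j then (τ : ℝ) else 0) ≤ k * τ := by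
    rw [Fin.sum_univ_eq_sum_range (fun j => if S (j + 1) ≠ S j then (τ : ℝ) else 0),
      ← sum_filter, sum_const, nsmul_eq_mul]
    gcongr
    exact_mod_cast card_filter_aliveSet_ne_le p N
  rw [seqReward_eq_sum_phaseReward]
  calc _ ≤ ∑ j : Fin N, (committedReward δ μ (S j) (splitPhases q j) (splitPhases p j) +
        if S (j + 1) ≠ S j then (τ : ℝ) else 0) := sum_le_sum fun j _ => hphase j
    _ ≤ _ := by rw [sum_add_distrib]; gcongr

theorem expReward_eq_sum_splitPhases (A : Alg k n (N * τ)) :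
    expReward (N * τ) τ P μ δ A =
      ∑ Q : Fin N → Fin τ → Fin n, (∏ j, seqProb τ P (Q j)) *
        seqReward (N * τ) τ μ δ (A.1 (splitPhases.symm Q)) (splitPhases.symm Q) := by
  rw [expReward, ← splitPhases.symm.sum_comp]
  refine sum_congr rfl fun Q _ => ?_
  rw [seqProb, ← finProdFinEquiv.prod_comp, Fintype.prod_prod_type]
  simp only [splitPhases_symm_apply, seqProb]

end Rewards

section UpperBound

variable {k n N τ : ℕ} {P : Fin n → ℝ} {μ : Fin n → Fin k → ℝ} {δ : Fin k → ℕ}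

def phasePolicy (A : Alg k n (N * τ)) (Q : Fin N → Fin τ → Fin n) (j : Fin N) :
    (Fin τ → Fin n) → Fin τ → Fin k :=
  fun w => splitPhases (A.1 (splitPhases.symm (Function.update Q j w))) j

theorem causal_phasePolicy (A : Alg k n (N * τ)) (Q : Fin N → Fin τ → Fin n) (j : Fin N) :
    Causal (phasePolicy A Q j) :=
  fun _ _ _ hw => A.2 _ _ _ fun _ ht => splitPhases_symm_update_eq_of_le Q hw ht

theorem aliveSet_update (A : Alg k n (N * τ)) (Q : Fin N → Fin τ → Fin n) (j : Fin N)
    (w : Fin τ → Fin n) :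
    aliveSet (N * τ) τ δ (A.1 (splitPhases.symm (Function.update Q j w))) j =
      aliveSet (N * τ) τ δ (A.1 (splitPhases.symm Q)) j :=
  aliveSet_congr fun _ ht => A.2 _ _ _ fun _ ht' =>
    splitPhases_symm_update_of_lt Q w ((Fin.le_iff_val_le_val.1 ht').trans_lt ht)

/-- Conditionally on the other phases, phase `j` of `A` is a causal policy, and the arms present
at its start do not depend on the types of phase `j`. -/
theorem sum_committedReward_le (hP : ∀ u, 0 ≤ P u) (hPsum : ∑ u, P u = 1) {V : ℝ}
    (hV : ∀ Z π, Causal π → committedValue τ P μ δ Z π ≤ V) (A : Alg k n (N * τ)) (j : Fin N) :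
    ∑ Q : Fin N → Fin τ → Fin n, (∏ i, seqProb τ P (Q i)) *
      committedReward δ μ (aliveSet (N * τ) τ δ (A.1 (splitPhases.symm Q)) j) (Q j)
        (splitPhases (A.1 (splitPhases.symm Q)) j) ≤ V := by
  have hsumP : ∑ w : Fin τ → Fin n, seqProb τ P w = 1 := sum_prod_eq_one hPsum
  rw [sum_prod_mul_eq_sum_prod_mul_sum_update hsumP j]
  calc _ = ∑ Q : Fin N → Fin τ → Fin n, (∏ i, seqProb τ P (Q i)) *
        committedValue τ P μ δ (aliveSet (N * τ) τ δ (A.1 (splitPhases.symm Q)) j)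
          (phasePolicy A Q j) := by
        refine sum_congr rfl fun Q _ => ?_
        simp only [committedValue, aliveSet_update, Function.update_self]
        rfl
    _ ≤ ∑ Q : Fin N → Fin τ → Fin n, (∏ i, seqProb τ P (Q i)) * V :=
        sum_le_sum fun Q _ => mul_le_mul_of_nonneg_left (hV _ _ (causal_phasePolicy A Q j))
          (prod_nonneg fun i _ => seqProb_nonneg hP τ (Q i))
    _ = V := by rw [← sum_mul, sum_prod_eq_one hsumP, one_mul]

theorem expReward_le (hP : ∀ u, 0 ≤ P u) (hPsum : ∑ u, P u = 1)
    (hμ : ∀ u a, 0 ≤ μ u a ∧ μ u a ≤ 1) {V : ℝ}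
    (hV : ∀ Z π, Causal π → committedValue τ P μ δ Z π ≤ V) (A : Alg k n (N * τ)) :
    expReward (N * τ) τ P μ δ A ≤ N * V + k * τ := by
  have hW : ∑ Q : Fin N → Fin τ → Fin n, ∏ j, seqProb τ P (Q j) = 1 :=
    sum_prod_eq_one (sum_prod_eq_one hPsum)
  set C : (Fin N → Fin τ → Fin n) → Fin N → ℝ := fun Q j =>
    committedReward δ μ (aliveSet (N * τ) τ δ (A.1 (splitPhases.symm Q)) j) (Q j)
      (splitPhases (A.1 (splitPhases.symm Q)) j)
  rw [expReward_eq_sum_splitPhases]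
  calc _ ≤ ∑ Q : Fin N → Fin τ → Fin n, (∏ j, seqProb τ P (Q j)) * (∑ j, C Q j + k * τ) := by
        refine sum_le_sum fun Q _ => mul_le_mul_of_nonneg_left ?_
          (prod_nonneg fun j _ => seqProb_nonneg hP τ (Q j))
        simpa only [C, Equiv.apply_symm_apply] using seqReward_le hμ _ (splitPhases.symm Q)
    _ = ∑ j, ∑ Q : Fin N → Fin τ → Fin n, (∏ i, seqProb τ P (Q i)) * C Q j + k * τ := by
        simp only [mul_add, sum_add_distrib, mul_sum, ← sum_mul, hW, one_mul]
        rw [sum_comm]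
    _ ≤ ∑ _j : Fin N, V + k * τ := by
        gcongr with j
        exact sum_committedReward_le hP hPsum hV A j
    _ = N * V + k * τ := by simp

end UpperBound

section LowerBound

variable {k n N τ : ℕ} {P : Fin n → ℝ} {μ : Fin n → Fin k → ℝ} {δ : Fin k → ℕ}
  {Z : Finset (Fin k)} {σ : (Fin τ → Fin n) → Fin τ → Fin k}

theorem mk_mul_add_eq_finProdFinEquiv {i s : ℕ} (hs : s < τ) (h : i * τ + s < N * τ) :
    (⟨i * τ + s, h⟩ : Fin (N * τ)) =
      finProdFinEquiv (⟨i, Nat.lt_of_mul_lt_mul_right (by omega : i * τ < N * τ)⟩, ⟨s, hs⟩) :=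
  Fin.ext (by simp only [finProdFinEquiv_apply_val]; ring)

def repeatAlg (σ : (Fin τ → Fin n) → Fin τ → Fin k) (hσ : Causal σ) : Alg k n (N * τ) :=
  ⟨fun q => splitPhases.symm fun j => σ (splitPhases q j), fun q q' t h => by
    obtain ⟨⟨j, s⟩, rfl⟩ := finProdFinEquiv.surjective t
    simp only [splitPhases_symm_apply]
    refine hσ _ _ s fun s' hs' => h _ ?_
    simp only [Fin.le_def, finProdFinEquiv_apply_val] at hs' ⊢
    omega⟩

@[simp]
theorem splitPhases_repeatAlg (hσ : Causal σ) (q : Fin (N * τ) → Fin n) (j : Fin N) :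
    splitPhases ((repeatAlg σ hσ).1 q) j = σ (splitPhases q j) := by
  simp [repeatAlg]

theorem phaseInd_repeatAlg (hσ : Causal σ) : PhaseInd τ (repeatAlg (N := N) σ hσ) := by
  intro q i j s hs hi hj h
  rw [mk_mul_add_eq_finProdFinEquiv hs hi, mk_mul_add_eq_finProdFinEquiv hs hj]
  simp only [repeatAlg, splitPhases_symm_apply]
  refine hσ _ _ _ fun s' hs' => ?_
  have hs'τ := s'.2
  have hs's : (s' : ℕ) ≤ s := hs'
  have hi' : i * τ + s' < N * τ := by omega
  have hj' : j * τ + s' < N * τ := by omega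
  simpa only [splitPhases_apply, mk_mul_add_eq_finProdFinEquiv hs'τ hi',
    mk_mul_add_eq_finProdFinEquiv hs'τ hj'] using h s' hs's hi' hj'

theorem committed_repeatAlg (hτ : 0 < τ) (hσ : Causal σ) (hZ : ∀ w s, σ w s ∈ Z)
    (hσZ : ∀ w, MeetsQuotas δ Z (σ w)) : Committed τ δ Z (repeatAlg (N := N) σ hσ) := by
  intro q
  refine ⟨fun t => ?_, fun j hj a ha => ?_⟩
  · obtain ⟨⟨j, s⟩, rfl⟩ := finProdFinEquiv.surjective t
    simpa [repeatAlg] using hZ _ s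
  · have hjN : j < N := Nat.lt_of_mul_lt_mul_right (a := τ) (by rw [add_one_mul] at hj; omega)
    rw [show j = ((⟨j, hjN⟩ : Fin N) : ℕ) from rfl, pullsInPhase_eq_card, splitPhases_repeatAlg]
    exact hσZ _ a ha

theorem subset_aliveSet_repeatAlg (hσ : Causal σ) (hσZ : ∀ w, MeetsQuotas δ Z (σ w))
    (q : Fin (N * τ) → Fin n) (j : Fin N) :
    Z ⊆ aliveSet (N * τ) τ δ ((repeatAlg σ hσ).1 q) j := fun a ha =>
  mem_aliveSet.2 fun i hi => by
    have hiN : i < N := hi.trans j.2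
    rw [show i = ((⟨i, hiN⟩ : Fin N) : ℕ) from rfl, pullsInPhase_eq_card, splitPhases_repeatAlg]
    exact hσZ _ a ha

theorem expReward_repeatAlg (hPsum : ∑ u, P u = 1) (hσ : Causal σ) (hZ : ∀ w s, σ w s ∈ Z)
    (hσZ : ∀ w, MeetsQuotas δ Z (σ w)) :
    expReward (N * τ) τ P μ δ (repeatAlg σ hσ) =
      N * ∑ w, seqProb τ P w * ∑ s, μ (w s) (σ w s) := by
  have hsumP : ∑ w : Fin τ → Fin n, seqProb τ P w = 1 := sum_prod_eq_one hPsum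
  set g : (Fin τ → Fin n) → ℝ := fun w => ∑ s, μ (w s) (σ w s)
  have hseq : ∀ Q : Fin N → Fin τ → Fin n,
      seqReward (N * τ) τ μ δ ((repeatAlg σ hσ).1 (splitPhases.symm Q)) (splitPhases.symm Q) =
        ∑ j, g (Q j) := fun Q => by
    rw [seqReward_eq_sum_phaseReward]
    refine sum_congr rfl fun j _ => sum_congr rfl fun s _ => ?_
    simp only [splitPhases_repeatAlg, Equiv.apply_symm_apply]
    exact if_pos (subset_aliveSet_repeatAlg hσ hσZ _ j (hZ _ s))
  calc expReward (N * τ) τ P μ δ (repeatAlg σ hσ)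
      = ∑ Q : Fin N → Fin τ → Fin n, ∑ j, (∏ i, seqProb τ P (Q i)) * g (Q j) := by
        rw [expReward_eq_sum_splitPhases]
        exact sum_congr rfl fun Q _ => by rw [hseq, mul_sum]
    _ = ∑ j : Fin N, ∑ w, seqProb τ P w * g w := by
        rw [sum_comm]
        exact sum_congr rfl fun j _ => sum_prod_mul_apply_eq hsumP j g
    _ = N * ∑ w, seqProb τ P w * g w := by simp

theorem expReward_nonneg (hP : ∀ u, 0 ≤ P u) (hμ : ∀ u a, 0 ≤ μ u a) {T : ℕ} (A : Alg k n T) :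
    0 ≤ expReward T τ P μ δ A :=
  sum_nonneg fun q _ => mul_nonneg (seqProb_nonneg hP T q)
    (sum_nonneg fun t _ => by split_ifs <;> simp [hμ])

variable {z₀ : Fin k}

theorem committedReward_le_sum_repair (hμ : ∀ u a, 0 ≤ μ u a) (w : Fin τ → Fin n)
    (p : Fin τ → Fin k) : committedReward δ μ Z w p ≤ ∑ s, μ (w s) (repair τ δ Z z₀ p s) := by
  unfold committedReward
  split_ifs with hp
  · refine sum_le_sum fun s _ => ?_
    split_ifs with hps
    exacts [by rw [repair_eq_self hp hps], hμ _ _]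
  · exact sum_nonneg fun s _ => hμ _ _

theorem mul_committedValue_le_picoReward (hτ : 0 < τ) (hP : ∀ u, 0 ≤ P u)
    (hPsum : ∑ u, P u = 1) (hμ : ∀ u a, 0 ≤ μ u a) (hZ : ∑ a ∈ Z, δ a ≤ τ)
    {π : (Fin τ → Fin n) → Fin τ → Fin k} (hπ : Causal π) :
    N * committedValue τ P μ δ Z π ≤ picoReward k n (N * τ) τ P μ δ := by
  obtain rfl | ⟨z₀, hz₀⟩ := Z.eq_empty_or_nonempty
  · rw [committedValue_empty, mul_zero]
    exact Real.iSup_nonneg fun A => expReward_nonneg hP hμ A.1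
  set σ := fun w => repair τ δ Z z₀ (π w)
  have hσ : Causal σ := fun w w' s h =>
    repair_congr fun s' hs' => hπ w w' s' fun s'' hs'' => h s'' (hs''.trans hs')
  have hσZ : ∀ w s, σ w s ∈ Z := fun w => repair_mem hz₀ (π w)
  have hσq : ∀ w, MeetsQuotas δ Z (σ w) := fun w => meetsQuotas_repair hZ (π w)
  calc N * committedValue τ P μ δ Z π ≤ N * ∑ w, seqProb τ P w * ∑ s, μ (w s) (σ w s) := by
        refine mul_le_mul_of_nonneg_left (sum_le_sum fun w _ => ?_) (Nat.cast_nonneg N)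
        exact mul_le_mul_of_nonneg_left (committedReward_le_sum_repair hμ w (π w))
          (seqProb_nonneg hP τ w)
    _ = expReward (N * τ) τ P μ δ (repeatAlg σ hσ) := (expReward_repeatAlg hPsum hσ hσZ hσq).symm
    _ ≤ picoReward k n (N * τ) τ P μ δ :=
        le_ciSup (f := fun A : {A : Alg k n (N * τ) // PhaseInd τ A ∧ ∃ Z, Committed τ δ Z A} =>
            expReward (N * τ) τ P μ δ A.1) (Set.finite_range _).bddAbove
          ⟨repeatAlg σ hσ, phaseInd_repeatAlg hσ, Z, committed_repeatAlg hτ hσ hσZ hσq⟩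

end LowerBound

theorem exists_forall_committedValue_le {k n τ : ℕ} (P : Fin n → ℝ) (μ : Fin n → Fin k → ℝ)
    (δ : Fin k → ℕ) (a₀ : Fin k) :
    ∃ (Z : Finset (Fin k)) (π : (Fin τ → Fin n) → Fin τ → Fin k), Causal π ∧
      ∀ Z' π', Causal π' → committedValue τ P μ δ Z' π' ≤ committedValue τ P μ δ Z π := by
  let Policies := {x : Finset (Fin k) × ((Fin τ → Fin n) → Fin τ → Fin k) // Causal x.2}
  have : Nonempty Policies := ⟨⟨(∅, fun _ _ => a₀), fun _ _ _ _ => rfl⟩⟩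
  obtain ⟨⟨⟨Z, π⟩, hπ⟩, hmax⟩ := Finite.exists_max fun x : Policies =>
    committedValue τ P μ δ x.1.1 x.1.2
  exact ⟨Z, π, hπ, fun Z' π' hπ' => hmax ⟨(Z', π'), hπ'⟩⟩

theorem sum_le_of_sum_max_le {ι : Type*} [Fintype ι] {τ : ℕ} {δ : ι → ℕ} {c : ℝ}
    (h : ∑ a, max (δ a : ℝ) c ≤ τ) (Z : Finset ι) : ∑ a ∈ Z, δ a ≤ τ := by
  have : ((∑ a ∈ Z, δ a : ℕ) : ℝ) ≤ τ := by
    push_cast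
    calc ∑ a ∈ Z, (δ a : ℝ) ≤ ∑ a ∈ Z, max (δ a : ℝ) c := sum_le_sum fun a _ => le_max_left _ _
      _ ≤ ∑ a, max (δ a : ℝ) c := sum_le_sum_of_subset_of_nonneg (subset_univ Z)
          fun a _ _ => (Nat.cast_nonneg _).trans (le_max_left _ _)
      _ ≤ τ := h
  exact_mod_cast this

theorem pico_approximates_opt_general
    (k n τ N : ℕ) (hk : 1 ≤ k) (hτ : 1 ≤ τ)
    (P : Fin n → ℝ) (hP : ∀ u, 0 < P u) (hPsum : ∑ u, P u = 1)
    (μ : Fin n → Fin k → ℝ) (hμ : ∀ u a, 0 ≤ μ u a ∧ μ u a ≤ 1)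
    (δ : Fin k → ℕ)
    (γ : ℝ)
    (hfeas : ∑ a : Fin k, max ((δ a : ℝ)) (γ * (τ : ℝ)) ≤ (τ : ℝ)) :
    picoReward k n (N * τ) τ P μ δ
      ≥ optReward k n (N * τ) τ P μ δ - (k : ℝ) * (τ : ℝ) := by
  have hP₀ : ∀ u, 0 ≤ P u := fun u => (hP u).le
  have hμ₀ : ∀ u a, 0 ≤ μ u a := fun u a => (hμ u a).1
  obtain ⟨Z, π, hπ, hmax⟩ := exists_forall_committedValue_le (τ := τ) P μ δ ⟨0, hk⟩
  have hopt : optReward k n (N * τ) τ P μ δ ≤ N * committedValue τ P μ δ Z π + k * τ :=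
    Real.iSup_le (expReward_le hP₀ hPsum hμ hmax) (by
      have := committedValue_nonneg hP₀ hμ₀ (δ := δ) Z π
      positivity)
  have hpico := mul_committedValue_le_picoReward (N := N) hτ hP₀ hPsum hμ₀
    (sum_le_of_sum_max_le hfeas Z) hπ
  linarith

/-- Theorem 2 of the paper: under the fast-exploration assumption, the best phase-independent
committed algorithm is within `k·τ` of `OPT`. -/
theorem pico_approximates_opt
    (k n τ N : ℕ) (hk : 1 ≤ k) (hn : 1 ≤ n) (hτ : 1 ≤ τ) (hN : 1 ≤ N)
    (P : Fin n → ℝ) (hP : ∀ u, 0 < P u) (hPsum : ∑ u, P u = 1)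
    (μ : Fin n → Fin k → ℝ) (hμ : ∀ u a, 0 ≤ μ u a ∧ μ u a ≤ 1)
    (δ : Fin k → ℕ) (hδ : ∀ a, δ a ≤ τ)
    (γ : ℝ) (hγ0 : 0 < γ) (hγk : γ ≤ 1 / (k : ℝ))
    (hfeas : ∑ a : Fin k, max ((δ a : ℝ)) (γ * (τ : ℝ)) ≤ (τ : ℝ)) :
    picoReward k n (N * τ) τ P μ δ
      ≥ optReward k n (N * τ) τ P μ δ - (k : ℝ) * (τ : ℝ) :=
  pico_approximates_opt_general k n τ N hk hτ P hP hPsum μ hμ δ γ hfeas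

end ExposureBandits
end

section
/- For every τ ≥ 2 and every Z ⊆ K with Σ_{a∈Z} δ_a ≤ τ, it holds that DOAlg(c^+,Z) ≥ E_{q∼P^τ}[DOAlg(c(q),Z)] − n·(√(τ·log τ) + 2). -/
open scoped BigOperators Classical

namespace ExposureBandits

/-- The aggregate `c(q)`: the number of arrivals of each user type in the sequence `q`. -/
def typeCount {n : ℕ} (τ : ℕ) (q : Fin τ → Fin n) (u : Fin n) : ℕ :=
  (Finset.univ.filter (fun t : Fin τ => q t = u)).card

/-- `DOAlg(c, Z)`: the maximum reward of a matching of the users given by the aggregate `c`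
to the arms of `Z`, satisfying the exposure constraints of every arm of `Z`. -/
noncomputable def DOAlgR {k m : ℕ} (μ : Fin m → Fin k → ℝ) (δ : Fin k → ℕ)
    (c : Fin m → ℕ) (Z : Finset (Fin k)) : ℝ :=
  sSup {r : ℝ | ∃ M : Fin m → Fin k → ℕ,
    (∀ u, ∑ a, M u a = c u) ∧ (∀ u a, a ∉ Z → M u a = 0) ∧
    (∀ a ∈ Z, δ a ≤ ∑ u, M u a) ∧
    r = ∑ u, ∑ a, (M u a : ℝ) * μ u a}

/-- The utility matrix augmented with the slack user type `u⋆` (the last index), whose utility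
is `0` for every arm. -/
noncomputable def muPlus {k n : ℕ} (μ : Fin n → Fin k → ℝ) : Fin (n + 1) → Fin k → ℝ :=
  Fin.snoc μ (fun _ => 0)

/-- `c⁺_u = ⌊P_u·τ − √(τ·log τ)⌋` for a real user type `u`. -/
noncomputable def cplusBase {n : ℕ} (P : Fin n → ℝ) (τ : ℕ) (u : Fin n) : ℕ :=
  ⌊P u * τ - Real.sqrt (τ * Real.log τ)⌋₊

/-- The augmented lower-confidence aggregate `c⁺`: its last entry is the number of slack
users, absorbing the gap between the lower confidence bounds and the phase length. -/
noncomputable def cplus {n : ℕ} (P : Fin n → ℝ) (τ : ℕ) : Fin (n + 1) → ℕ :=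
  Fin.snoc (cplusBase P τ) (τ - ∑ u, cplusBase P τ u)


/-- Select a sub-vector with a prescribed smaller sum. -/
lemma select_sub {k : ℕ} : ∀ (m : ℕ) (v : Fin k → ℕ), m ≤ ∑ a, v a →
    ∃ w : Fin k → ℕ, (∀ a, w a ≤ v a) ∧ ∑ a, w a = m := by
  intro m
  induction m with
  | zero => exact fun v _ => ⟨fun _ => 0, fun a => Nat.zero_le _, by simp⟩
  | succ m ih =>
    intro v hv
    obtain ⟨w, hw1, hw2⟩ := ih v (Nat.le_of_succ_le hv)
    have : ∃ a, w a < v a := by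
      by_contra h
      push_neg at h
      have : ∑ a, v a ≤ ∑ a, w a := Finset.sum_le_sum fun a _ => h a
      omega
    obtain ⟨a, ha⟩ := this
    refine ⟨Function.update w a (w a + 1), ?_, ?_⟩
    · intro b
      rcases eq_or_ne b a with rfl | hb
      · simpa using ha
      · simp only [Function.update_apply, if_neg hb]; exact hw1 b
    · rw [Finset.sum_update_of_mem (Finset.mem_univ a),
        Finset.sdiff_singleton_eq_erase]
      have := Finset.add_sum_erase Finset.univ w (Finset.mem_univ a)
      omega

/-- Transportation: a `ℕ`-matrix with prescribed row and column sums exists when totals agree. -/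
lemma transport : ∀ (N : ℕ) {m k : ℕ} (e : Fin m → ℕ) (ρ : Fin k → ℕ),
    ∑ i, e i = N → ∑ j, ρ j = N →
    ∃ F : Fin m → Fin k → ℕ, (∀ i, ∑ j, F i j = e i) ∧ (∀ j, ∑ i, F i j = ρ j) := by
  intro N
  induction N with
  | zero =>
    intro m k e ρ he hρ
    refine ⟨fun _ _ => 0, fun i => ?_, fun j => ?_⟩
    · simp [(Finset.sum_eq_zero_iff.mp he) i (Finset.mem_univ i)]
    · simp [(Finset.sum_eq_zero_iff.mp hρ) j (Finset.mem_univ j)]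
  | succ N ih =>
    intro m k e ρ he hρ
    have hi : ∃ i, e i ≠ 0 := by
      by_contra h; push_neg at h
      simp [Finset.sum_congr rfl fun i _ => h i] at he
    have hj : ∃ j, ρ j ≠ 0 := by
      by_contra h; push_neg at h
      simp [Finset.sum_congr rfl fun j _ => h j] at hρ
    obtain ⟨i, hi⟩ := hi
    obtain ⟨j, hj⟩ := hj
    have hei := Finset.add_sum_erase Finset.univ e (Finset.mem_univ i)
    have hρj := Finset.add_sum_erase Finset.univ ρ (Finset.mem_univ j)
    have he' : ∑ a, Function.update e i (e i - 1) a = N := by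
      rw [Finset.sum_update_of_mem (Finset.mem_univ i), Finset.sdiff_singleton_eq_erase]; omega
    have hρ' : ∑ b, Function.update ρ j (ρ j - 1) b = N := by
      rw [Finset.sum_update_of_mem (Finset.mem_univ j), Finset.sdiff_singleton_eq_erase]; omega
    obtain ⟨F, hF1, hF2⟩ := ih _ _ he' hρ'
    refine ⟨fun a b => F a b + if a = i ∧ b = j then 1 else 0, fun a => ?_, fun b => ?_⟩
    · rw [Finset.sum_add_distrib, hF1 a]
      rcases eq_or_ne a i with rfl | ha
      · simp [Function.update_self]; omega
      · simp [ha, Function.update_apply]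
    · rw [Finset.sum_add_distrib, hF2 b]
      rcases eq_or_ne b j with rfl | hb
      · simp [Function.update_self]; omega
      · simp [hb, Function.update_apply]

lemma doalg_mem_le {k m : ℕ} (μ : Fin m → Fin k → ℝ) (δ : Fin k → ℕ)
    (c : Fin m → ℕ) (Z : Finset (Fin k)) (hμ1 : ∀ u a, μ u a ≤ 1) :
    ∀ r ∈ {r : ℝ | ∃ M : Fin m → Fin k → ℕ,
    (∀ u, ∑ a, M u a = c u) ∧ (∀ u a, a ∉ Z → M u a = 0) ∧
    (∀ a ∈ Z, δ a ≤ ∑ u, M u a) ∧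
    r = ∑ u, ∑ a, (M u a : ℝ) * μ u a}, r ≤ ∑ u, (c u : ℝ) := by
  rintro r ⟨M, h1, _, _, rfl⟩
  refine Finset.sum_le_sum fun u _ => ?_
  calc ∑ a, (M u a : ℝ) * μ u a ≤ ∑ a, (M u a : ℝ) :=
        Finset.sum_le_sum fun a _ => mul_le_of_le_one_right (Nat.cast_nonneg _) (hμ1 u a)
    _ = (c u : ℝ) := by rw [← Nat.cast_sum, h1 u]

lemma doalg_bddAbove {k m : ℕ} (μ : Fin m → Fin k → ℝ) (δ : Fin k → ℕ)
    (c : Fin m → ℕ) (Z : Finset (Fin k)) (hμ1 : ∀ u a, μ u a ≤ 1) :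
    BddAbove {r : ℝ | ∃ M : Fin m → Fin k → ℕ,
    (∀ u, ∑ a, M u a = c u) ∧ (∀ u a, a ∉ Z → M u a = 0) ∧
    (∀ a ∈ Z, δ a ≤ ∑ u, M u a) ∧
    r = ∑ u, ∑ a, (M u a : ℝ) * μ u a} :=
  ⟨∑ u, (c u : ℝ), fun r hr => doalg_mem_le μ δ c Z hμ1 r hr⟩

lemma doalg_nonneg {k m : ℕ} (μ : Fin m → Fin k → ℝ) (δ : Fin k → ℕ)
    (c : Fin m → ℕ) (Z : Finset (Fin k)) (hμ0 : ∀ u a, 0 ≤ μ u a) :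
    0 ≤ DOAlgR μ δ c Z := by
  refine Real.sSup_nonneg ?_
  rintro r ⟨M, _, _, _, rfl⟩
  exact Finset.sum_nonneg fun u _ => Finset.sum_nonneg fun a _ =>
    mul_nonneg (Nat.cast_nonneg _) (hμ0 u a)

lemma muPlus_nonneg {k n : ℕ} (μ : Fin n → Fin k → ℝ) (hμ : ∀ u a, 0 ≤ μ u a ∧ μ u a ≤ 1) :
    ∀ u a, 0 ≤ muPlus μ u a := by
  intro u a
  refine Fin.lastCases ?_ (fun v => ?_) u
  · simp [muPlus]
  · simp only [muPlus, Fin.snoc_castSucc]; exact (hμ v a).1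

lemma muPlus_le_one {k n : ℕ} (μ : Fin n → Fin k → ℝ) (hμ : ∀ u a, 0 ≤ μ u a ∧ μ u a ≤ 1) :
    ∀ u a, muPlus μ u a ≤ 1 := by
  intro u a
  refine Fin.lastCases ?_ (fun v => ?_) u
  · simp [muPlus]
  · simp only [muPlus, Fin.snoc_castSucc]; exact (hμ v a).2

/-- Lemma A: deterministic comparison. -/
lemma doalg_le_cplus {k n τ : ℕ} (P : Fin n → ℝ) (μ : Fin n → Fin k → ℝ)
    (δ : Fin k → ℕ) (Z : Finset (Fin k))
    (hμ : ∀ u a, 0 ≤ μ u a ∧ μ u a ≤ 1)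
    (hbase : ∑ u, cplusBase P τ u ≤ τ)
    (c : Fin n → ℕ) (hc : ∑ u, c u = τ) :
    DOAlgR μ δ c Z ≤ DOAlgR (muPlus μ) δ (cplus P τ) Z
      + ∑ u, ((c u - cplusBase P τ u : ℕ) : ℝ) := by
  have hpen0 : (0:ℝ) ≤ ∑ u, ((c u - cplusBase P τ u : ℕ) : ℝ) :=
    Finset.sum_nonneg fun u _ => Nat.cast_nonneg _
  refine Real.sSup_le ?_
    (add_nonneg (doalg_nonneg _ _ _ _ (muPlus_nonneg μ hμ)) hpen0)
  rintro r ⟨M, hrow, hoff, hcol, rfl⟩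
  have hsel : ∀ u, ∃ w : Fin k → ℕ, (∀ a, w a ≤ M u a) ∧
      ∑ a, w a = c u - cplusBase P τ u := fun u =>
    select_sub _ _ (by rw [hrow u]; exact Nat.sub_le _ _)
  choose R hR1 hR2 using hsel
  -- totals for the transportation problem
  have hsum_sub : ∀ v, ∑ a, (M v a - R v a) + ∑ a, R v a = c v := by
    intro v
    rw [← Finset.sum_add_distrib,
      Finset.sum_congr rfl fun a _ => Nat.sub_add_cancel (hR1 v a), hrow v]
  have htot : ∑ u : Fin (n+1),
      ((Fin.snoc (fun u => cplusBase P τ u - c u) (τ - ∑ u, cplusBase P τ u) : Fin (n+1) → ℕ) u)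
      = ∑ a, ∑ u, R u a := by
    rw [Fin.sum_univ_castSucc]
    simp only [Fin.snoc_castSucc, Fin.snoc_last]
    rw [Finset.sum_comm]
    have h1 : ∑ u, ((cplusBase P τ u - c u) + c u)
        = ∑ u, ((c u - cplusBase P τ u) + cplusBase P τ u) :=
      Finset.sum_congr rfl fun u _ => by omega
    rw [Finset.sum_add_distrib, Finset.sum_add_distrib] at h1
    have h2 : ∑ u, ∑ a, R u a = ∑ u, (c u - cplusBase P τ u) :=
      Finset.sum_congr rfl fun u _ => hR2 u
    omega
  obtain ⟨F, hF1, hF2⟩ := transport _ _ _ htot rfl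
  set Mp : Fin (n+1) → Fin k → ℕ := fun u a =>
    (Fin.snoc (fun v b => M v b - R v b) (fun _ => (0:ℕ)) : Fin (n+1) → Fin k → ℕ) u a
      + F u a with hMp
  -- row sums
  have hrows : ∀ u, ∑ a, Mp u a = cplus P τ u := by
    intro u
    refine Fin.lastCases ?_ (fun v => ?_) u
    · have := hF1 (Fin.last n)
      simp only [Fin.snoc_last] at this
      simp only [hMp, Fin.snoc_last, Finset.sum_add_distrib, this, cplus]
      simp
    · have hf := hF1 (Fin.castSucc v)
      simp only [Fin.snoc_castSucc] at hf
      simp only [hMp, Fin.snoc_castSucc, Finset.sum_add_distrib, hf, cplus]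
      have := hsum_sub v
      have := hR2 v
      omega
  -- off-support zeros
  have hzero : ∀ u a, a ∉ Z → Mp u a = 0 := by
    intro u a ha
    have hR0 : ∀ v, R v a = 0 := fun v => Nat.le_zero.mp (hoff v a ha ▸ hR1 v a)
    have hρ0 : ∑ v, R v a = 0 := Finset.sum_eq_zero fun v _ => hR0 v
    have hF0 : ∀ w : Fin (n+1), F w a = 0 := by
      intro w
      have hle : F w a ≤ ∑ w : Fin (n+1), F w a :=
        Finset.single_le_sum (f := fun w => F w a) (fun w _ => Nat.zero_le _)
          (Finset.mem_univ w)
      rw [hF2 a, hρ0] at hle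
      omega
    refine Fin.lastCases ?_ (fun v => ?_) u
    · simp only [hMp, Fin.snoc_last]
      simp [hF0]
    · simp only [hMp, Fin.snoc_castSucc]
      simp [hF0, hoff v a ha, hR0 v]
  -- column sums
  have hcols : ∀ a ∈ Z, δ a ≤ ∑ u, Mp u a := by
    intro a ha
    have hsplit : ∑ u : Fin (n+1), Mp u a
        = ∑ v, (M v a - R v a) + ∑ u : Fin (n+1), F u a := by
      rw [Fin.sum_univ_castSucc (f := fun u => Mp u a)]
      simp only [hMp, Fin.snoc_castSucc, Fin.snoc_last, Finset.sum_add_distrib]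
      rw [Fin.sum_univ_castSucc (f := fun u => F u a)]
      omega
    rw [hsplit, hF2 a]
    have h1 : ∑ v, (M v a - R v a) + ∑ v, R v a = ∑ v, M v a := by
      rw [← Finset.sum_add_distrib,
        Finset.sum_congr rfl fun v _ => Nat.sub_add_cancel (hR1 v a)]
    have := hcol a ha
    omega
  -- the value of the modified matching
  have hmem : (∑ u, ∑ a, (Mp u a : ℝ) * muPlus μ u a) ∈
      {r : ℝ | ∃ M : Fin (n+1) → Fin k → ℕ,
        (∀ u, ∑ a, M u a = cplus P τ u) ∧ (∀ u a, a ∉ Z → M u a = 0) ∧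
        (∀ a ∈ Z, δ a ≤ ∑ u, M u a) ∧
        r = ∑ u, ∑ a, (M u a : ℝ) * muPlus μ u a} :=
    ⟨Mp, hrows, hzero, hcols, rfl⟩
  have hub : (∑ u, ∑ a, (Mp u a : ℝ) * muPlus μ u a) ≤ DOAlgR (muPlus μ) δ (cplus P τ) Z :=
    le_csSup (doalg_bddAbove _ _ _ _ (muPlus_le_one μ hμ)) hmem
  have hval : ∑ v, ∑ a, (M v a : ℝ) * μ v a
      ≤ (∑ u, ∑ a, (Mp u a : ℝ) * muPlus μ u a)
        + ∑ u, ((c u - cplusBase P τ u : ℕ) : ℝ) := by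
    rw [Fin.sum_univ_castSucc
      (f := fun u => ∑ a, (Mp u a : ℝ) * muPlus μ u a)]
    have hlast : ∑ a, (Mp (Fin.last n) a : ℝ) * muPlus μ (Fin.last n) a = 0 := by
      refine Finset.sum_eq_zero fun a _ => ?_
      have : muPlus μ (Fin.last n) a = 0 := by simp [muPlus]
      rw [this, mul_zero]
    rw [hlast, add_zero, ← sub_le_iff_le_add, ← Finset.sum_sub_distrib]
    refine Finset.sum_le_sum fun v _ => ?_
    have hMpv : ∀ a, (Mp (Fin.castSucc v) a : ℝ) = ((M v a - R v a : ℕ) : ℝ) + (F (Fin.castSucc v) a : ℝ) := by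
      intro a
      simp [hMp, Fin.snoc_castSucc]
    have hμv : ∀ a, muPlus μ (Fin.castSucc v) a = μ v a := by
      intro a
      simp [muPlus, Fin.snoc_castSucc]
    calc ∑ a, (M v a : ℝ) * μ v a - ((c v - cplusBase P τ v : ℕ) : ℝ)
        ≤ ∑ a, (M v a : ℝ) * μ v a - ∑ a, (R v a : ℝ) * μ v a := by
          have : ∑ a, (R v a : ℝ) * μ v a ≤ ((c v - cplusBase P τ v : ℕ) : ℝ) := by
            calc ∑ a, (R v a : ℝ) * μ v a ≤ ∑ a, (R v a : ℝ) :=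
                  Finset.sum_le_sum fun a _ =>
                    mul_le_of_le_one_right (Nat.cast_nonneg _) (hμ v a).2
              _ = ((c v - cplusBase P τ v : ℕ) : ℝ) := by
                  rw [← Nat.cast_sum, hR2 v]
          linarith
      _ = ∑ a, ((M v a : ℝ) - (R v a : ℝ)) * μ v a := by
          rw [← Finset.sum_sub_distrib]
          exact Finset.sum_congr rfl fun a _ => by ring
      _ ≤ ∑ a, (Mp (Fin.castSucc v) a : ℝ) * muPlus μ (Fin.castSucc v) a := by
          refine Finset.sum_le_sum fun a _ => ?_
          rw [hMpv a, hμv a, Nat.cast_sub (hR1 v a)]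
          have h0 : (0:ℝ) ≤ μ v a := (hμ v a).1
          have h1 : (0:ℝ) ≤ (F (Fin.castSucc v) a : ℝ) := Nat.cast_nonneg _
          nlinarith
  linarith

lemma typeCount_sum {n τ : ℕ} (q : Fin τ → Fin n) : ∑ u, typeCount τ q u = τ := by
  classical
  have := Finset.card_eq_sum_card_fiberwise
    (f := q) (s := Finset.univ) (t := Finset.univ) (fun t _ => Finset.mem_univ (q t))
  simpa [typeCount] using this.symm

/-- expectation of a product over coordinates factorizes -/
lemma sum_w_prod {n τ : ℕ} (P : Fin n → ℝ) (g : Fin n → ℝ) :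
    ∑ q : Fin τ → Fin n, (∏ t, P (q t)) * ∏ t, g (q t) = (∑ i, P i * g i) ^ τ := by
  rw [Fintype.sum_pow]
  exact Finset.sum_congr rfl fun q _ => (Finset.prod_mul_distrib).symm

lemma sum_w_one {n τ : ℕ} (P : Fin n → ℝ) (hPsum : ∑ u, P u = 1) :
    ∑ q : Fin τ → Fin n, (∏ t, P (q t)) = 1 := by
  have h := sum_w_prod (τ := τ) P (fun _ => (1:ℝ))
  simpa [hPsum] using h

lemma w_nonneg {n τ : ℕ} (P : Fin n → ℝ) (hP : ∀ u, 0 < P u) (q : Fin τ → Fin n) :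
    0 ≤ ∏ t, P (q t) :=
  Finset.prod_nonneg fun t _ => (hP (q t)).le

/-- exp (-x) ≤ 1 - x + x^2/2 for x ≥ 0 -/
lemma exp_neg_le_quadratic {x : ℝ} (hx : 0 ≤ x) :
    Real.exp (-x) ≤ 1 - x + x ^ 2 / 2 := by
  have hq := Real.quadratic_le_exp_of_nonneg hx
  have hinv : Real.exp (-x) * Real.exp x = 1 := by
    rw [← Real.exp_add]; simp
  nlinarith [Real.exp_pos (-x), Real.exp_pos x, sq_nonneg (x^2), sq_nonneg x,
    mul_pos (Real.exp_pos (-x)) (Real.exp_pos x)]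

/-- MGF bound for one step -/
lemma step_mgf {n : ℕ} (P : Fin n → ℝ) (hP : ∀ u, 0 < P u) (hPsum : ∑ u, P u = 1)
    (u : Fin n) {l : ℝ} (hl : 0 ≤ l) :
    ∑ i, P i * Real.exp (-l * (if i = u then (1:ℝ) else 0))
      ≤ Real.exp (P u * (l ^ 2 / 2 - l)) := by
  have hp1 : P u ≤ 1 := by
    have h := Finset.add_sum_erase Finset.univ P (Finset.mem_univ u)
    have : 0 ≤ ∑ x ∈ Finset.univ.erase u, P x :=
      Finset.sum_nonneg fun x _ => (hP x).le
    rw [hPsum] at h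
    linarith
  have hsplit : ∑ i, P i * Real.exp (-l * (if i = u then (1:ℝ) else 0))
      = P u * Real.exp (-l) + (1 - P u) := by
    rw [← Finset.add_sum_erase Finset.univ _ (Finset.mem_univ u)]
    have h1 : ∑ x ∈ Finset.univ.erase u, P x * Real.exp (-l * (if x = u then (1:ℝ) else 0))
        = ∑ x ∈ Finset.univ.erase u, P x := by
      refine Finset.sum_congr rfl fun x hx => ?_
      rw [if_neg (Finset.ne_of_mem_erase hx), mul_zero, Real.exp_zero, mul_one]
    have h2 : ∑ x ∈ Finset.univ.erase u, P x = 1 - P u := by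
      have h := Finset.add_sum_erase Finset.univ P (Finset.mem_univ u)
      rw [hPsum] at h; linarith
    rw [h1, h2, if_pos rfl, mul_one]
  rw [hsplit]
  have hexp : Real.exp (-l) ≤ 1 - l + l ^ 2 / 2 := exp_neg_le_quadratic hl
  have h3 : P u * Real.exp (-l) + (1 - P u) ≤ 1 + P u * (l ^ 2 / 2 - l) := by
    nlinarith [(hP u).le]
  calc P u * Real.exp (-l) + (1 - P u) ≤ P u * (l ^ 2 / 2 - l) + 1 := by linarith
    _ ≤ Real.exp (P u * (l ^ 2 / 2 - l)) := Real.add_one_le_exp _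

/-- geometric sum bound -/
lemma geom_Icc_le {x : ℝ} (hx0 : 0 ≤ x) (hx1 : x < 1) (A : ℕ) :
    ∑ i ∈ Finset.Icc 1 A, x ^ i ≤ x / (1 - x) := by
  have hkey : ∀ B : ℕ, (∑ i ∈ Finset.Icc 1 B, x ^ i) * (1 - x) = x - x ^ (B + 1) := by
    intro B
    induction B with
    | zero => simp
    | succ B ih =>
      rw [Finset.sum_Icc_succ_top (by omega : 1 ≤ B + 1), add_mul, ih]
      ring
  have h1x : 0 < 1 - x := by linarith
  rw [le_div_iff₀ h1x, hkey A]
  have : 0 ≤ x ^ (A + 1) := pow_nonneg hx0 _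
  linarith


set_option maxHeartbeats 1600000 in
/-- Chernoff-type bound: the expected deficit below the lower confidence bound is at most 1. -/
lemma deficit_le_one {n τ : ℕ} (hτ : 2 ≤ τ) (P : Fin n → ℝ) (hP : ∀ u, 0 < P u)
    (hPsum : ∑ u, P u = 1)
    (hcz : ∀ u : Fin n, 0 ≤ P u * (τ : ℝ) - Real.sqrt ((τ : ℝ) * Real.log (τ : ℝ)))
    (hlog : 1 ≤ Real.log (τ : ℝ)) (u : Fin n) :
    ∑ q : Fin τ → Fin n, (∏ t, P (q t)) * ((cplusBase P τ u - typeCount τ q u : ℕ) : ℝ)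
      ≤ 1 := by
  have hτ0 : (0:ℝ) < τ := by
    have : (2:ℝ) ≤ τ := by exact_mod_cast hτ
    linarith
  have hlogpos : 0 < Real.log τ := lt_of_lt_of_le one_pos hlog
  set s : ℝ := Real.sqrt ((τ : ℝ) * Real.log (τ : ℝ)) with hs
  have hsq : s ^ 2 = τ * Real.log τ := Real.sq_sqrt (by positivity)
  have hspos : 0 < s := Real.sqrt_pos.mpr (by positivity)
  set l : ℝ := s / τ with hl
  have hlpos : 0 < l := div_pos hspos hτ0
  set A := cplusBase P τ u with hA
  have hAle : (A:ℝ) ≤ P u * τ - s := Nat.floor_le (hcz u)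
  have hp1 : P u ≤ 1 := by
    have h := Finset.add_sum_erase Finset.univ P (Finset.mem_univ u)
    have h0 : 0 ≤ ∑ x ∈ Finset.univ.erase u, P x :=
      Finset.sum_nonneg fun x _ => (hP x).le
    rw [hPsum] at h
    linarith
  -- pointwise layer-cake bound
  have hpt : ∀ q : Fin τ → Fin n, ((A - typeCount τ q u : ℕ) : ℝ)
      ≤ ∑ i ∈ Finset.Icc 1 A, (if typeCount τ q u + i ≤ A then (1:ℝ) else 0) := by
    intro q
    calc ((A - typeCount τ q u : ℕ) : ℝ)
        = ∑ _i ∈ Finset.Icc 1 (A - typeCount τ q u), (1:ℝ) := by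
          simp [Nat.card_Icc]
      _ = ∑ i ∈ Finset.Icc 1 (A - typeCount τ q u),
            (if typeCount τ q u + i ≤ A then (1:ℝ) else 0) := by
          refine (Finset.sum_congr rfl fun i hi => ?_)
          rw [Finset.mem_Icc] at hi
          rw [if_pos (by omega)]
      _ ≤ ∑ i ∈ Finset.Icc 1 A, (if typeCount τ q u + i ≤ A then (1:ℝ) else 0) := by
          refine Finset.sum_le_sum_of_subset_of_nonneg
            (Finset.Icc_subset_Icc_right (Nat.sub_le _ _)) fun i _ _ => ?_
          split <;> norm_num
  -- the MGF bound
  have hmgf : ∑ q : Fin τ → Fin n, (∏ t, P (q t)) * Real.exp (-l * (typeCount τ q u))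
      ≤ Real.exp (P u * τ * (l^2/2 - l)) := by
    have hcast : ∀ q : Fin τ → Fin n, ((typeCount τ q u : ℝ))
        = ∑ t, (if q t = u then (1:ℝ) else 0) := by
      intro q
      rw [typeCount, Finset.card_filter]
      push_cast
      exact Finset.sum_congr rfl fun t _ => by split <;> norm_num
    have hrw : ∀ q : Fin τ → Fin n, Real.exp (-l * (typeCount τ q u))
        = ∏ t, Real.exp (-l * (if q t = u then (1:ℝ) else 0)) := by
      intro q
      rw [← Real.exp_sum, ← Finset.mul_sum, ← hcast q]
    have hbase0 : (0:ℝ) ≤ ∑ i, P i * Real.exp (-l * (if i = u then (1:ℝ) else 0)) :=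
      Finset.sum_nonneg fun i _ => mul_nonneg (hP i).le (Real.exp_pos _).le
    calc ∑ q : Fin τ → Fin n, (∏ t, P (q t)) * Real.exp (-l * (typeCount τ q u))
        = ∑ q : Fin τ → Fin n, (∏ t, P (q t)) *
            ∏ t, Real.exp (-l * (if q t = u then (1:ℝ) else 0)) :=
          Finset.sum_congr rfl fun q _ => by rw [hrw q]
      _ = (∑ i, P i * Real.exp (-l * (if i = u then (1:ℝ) else 0))) ^ τ :=
          sum_w_prod P (fun i => Real.exp (-l * (if i = u then (1:ℝ) else 0)))
      _ ≤ (Real.exp (P u * (l^2/2 - l))) ^ τ :=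
          pow_le_pow_left₀ hbase0 (step_mgf P hP hPsum u hlpos.le) τ
      _ = Real.exp ((τ:ℝ) * (P u * (l^2/2 - l))) := (Real.exp_nat_mul _ τ).symm
      _ = Real.exp (P u * τ * (l^2/2 - l)) := by ring_nf
  -- per-layer bound
  have hterm : ∀ i : ℕ,
      ∑ q : Fin τ → Fin n, (∏ t, P (q t)) *
          (if typeCount τ q u + i ≤ A then (1:ℝ) else 0)
        ≤ Real.exp (-Real.log τ / 2) * Real.exp (-l) ^ i := by
    intro i
    have hind : ∀ q : Fin τ → Fin n, (if typeCount τ q u + i ≤ A then (1:ℝ) else 0)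
        ≤ Real.exp (l * ((A:ℝ) - i - typeCount τ q u)) := by
      intro q
      split_ifs with h
      · refine Real.one_le_exp ?_
        have hle : (typeCount τ q u : ℝ) + i ≤ A := by exact_mod_cast h
        nlinarith [hlpos.le]
      · exact (Real.exp_pos _).le
    have hexpo : l * ((A:ℝ) - i) + P u * τ * (l^2/2 - l)
        ≤ -Real.log τ / 2 + -l * i := by
      have e1 : l * ((A:ℝ) - i) ≤ l * ((P u * τ - s) - i) := by
        have := hAle
        nlinarith [hlpos.le]
      have e3 : P u * τ * (l^2/2) ≤ τ * (l^2/2) := by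
        nlinarith [mul_nonneg (mul_nonneg (sub_nonneg.mpr hp1) hτ0.le) (sq_nonneg l)]
      have e5 : -(l*s) + τ * (l^2/2) = -Real.log τ / 2 := by
        rw [hl]
        field_simp
        nlinarith [hsq]
      nlinarith [e1, e3, e5]
    calc ∑ q : Fin τ → Fin n, (∏ t, P (q t)) *
            (if typeCount τ q u + i ≤ A then (1:ℝ) else 0)
        ≤ ∑ q : Fin τ → Fin n, (∏ t, P (q t)) *
            Real.exp (l * ((A:ℝ) - i - typeCount τ q u)) :=
          Finset.sum_le_sum fun q _ =>
            mul_le_mul_of_nonneg_left (hind q) (w_nonneg P hP q)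
      _ = Real.exp (l * ((A:ℝ) - i)) *
            ∑ q : Fin τ → Fin n, (∏ t, P (q t)) * Real.exp (-l * (typeCount τ q u)) := by
          rw [Finset.mul_sum]
          refine Finset.sum_congr rfl fun q _ => ?_
          rw [show l * ((A:ℝ) - i - typeCount τ q u)
              = l * ((A:ℝ) - i) + (-l * (typeCount τ q u)) by ring, Real.exp_add]
          ring
      _ ≤ Real.exp (l * ((A:ℝ) - i)) * Real.exp (P u * τ * (l^2/2 - l)) :=
          mul_le_mul_of_nonneg_left hmgf (Real.exp_pos _).le
      _ = Real.exp (l * ((A:ℝ) - i) + P u * τ * (l^2/2 - l)) := (Real.exp_add _ _).symm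
      _ ≤ Real.exp (-Real.log τ / 2 + -l * i) := Real.exp_le_exp.mpr hexpo
      _ = Real.exp (-Real.log τ / 2) * Real.exp (-l) ^ i := by
          rw [Real.exp_add]
          congr 1
          rw [← Real.exp_nat_mul]
          congr 1
          ring
  -- assemble
  have hx0 : (0:ℝ) ≤ Real.exp (-l) := (Real.exp_pos _).le
  have hx1 : Real.exp (-l) < 1 := Real.exp_lt_one_iff.mpr (by linarith)
  have hfrac : Real.exp (-l) / (1 - Real.exp (-l)) ≤ 1 / l := by
    have hxe : Real.exp (-l) * Real.exp l = 1 := by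
      rw [← Real.exp_add]; simp
    have h1l : 1 + l ≤ Real.exp l := by linarith [Real.add_one_le_exp l]
    rw [div_le_div_iff₀ (by linarith) hlpos]
    nlinarith [hx0]
  have hel : Real.exp (-Real.log τ / 2) ≤ l := by
    have hsr : Real.exp (Real.log τ / 2) = Real.sqrt τ := by
      rw [Real.exp_half, Real.exp_log hτ0]
    have hsrpos : 0 < Real.sqrt (τ:ℝ) := Real.sqrt_pos.mpr hτ0
    have hneg : Real.exp (-Real.log τ / 2) = (Real.sqrt τ)⁻¹ := by
      rw [show -Real.log τ / 2 = -(Real.log τ / 2) by ring, Real.exp_neg, hsr]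
    have hts : (τ:ℝ) ≤ Real.sqrt τ * s := by
      have h1 : Real.sqrt ((τ:ℝ) * τ) ≤ Real.sqrt ((τ:ℝ) * ((τ:ℝ) * Real.log τ)) := by
        apply Real.sqrt_le_sqrt
        nlinarith
      rw [Real.sqrt_mul hτ0.le ((τ:ℝ) * Real.log τ), ← hs] at h1
      rwa [Real.sqrt_mul_self hτ0.le] at h1
    rw [hneg, hl, inv_eq_one_div, div_le_div_iff₀ hsrpos hτ0]
    nlinarith
  calc ∑ q : Fin τ → Fin n, (∏ t, P (q t)) * ((A - typeCount τ q u : ℕ) : ℝ)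
      ≤ ∑ q : Fin τ → Fin n, (∏ t, P (q t)) *
          ∑ i ∈ Finset.Icc 1 A, (if typeCount τ q u + i ≤ A then (1:ℝ) else 0) :=
        Finset.sum_le_sum fun q _ =>
          mul_le_mul_of_nonneg_left (hpt q) (w_nonneg P hP q)
    _ = ∑ i ∈ Finset.Icc 1 A, ∑ q : Fin τ → Fin n, (∏ t, P (q t)) *
          (if typeCount τ q u + i ≤ A then (1:ℝ) else 0) := by
        rw [Finset.sum_comm]
        exact Finset.sum_congr rfl fun q _ => Finset.mul_sum _ _ _
      -- careful: need sum over q of (w * sum_i) = sum_i sum_q ...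
    _ ≤ ∑ i ∈ Finset.Icc 1 A, Real.exp (-Real.log τ / 2) * Real.exp (-l) ^ i :=
        Finset.sum_le_sum fun i _ => hterm i
    _ = Real.exp (-Real.log τ / 2) * ∑ i ∈ Finset.Icc 1 A, Real.exp (-l) ^ i :=
        (Finset.mul_sum _ _ _).symm
    _ ≤ Real.exp (-Real.log τ / 2) * (Real.exp (-l) / (1 - Real.exp (-l))) :=
        mul_le_mul_of_nonneg_left (geom_Icc_le hx0 hx1 A) (Real.exp_pos _).le
    _ ≤ l * (1/l) := by
        refine mul_le_mul hel hfrac ?_ hlpos.le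
        exact div_nonneg hx0 (by linarith)
    _ = 1 := by field_simp


set_option maxHeartbeats 1600000 in
/-- Proposition 3 of the paper: the offline matching value on the augmented lower-confidence
aggregate `c⁺` is close to the expected offline matching value on a random aggregate. -/
theorem doalg_cplus_close
    (k n τ : ℕ) (hk : 1 ≤ k) (hn : 1 ≤ n) (hτ : 2 ≤ τ)
    (P : Fin n → ℝ) (hP : ∀ u, 0 < P u) (hPsum : ∑ u, P u = 1)
    (μ : Fin n → Fin k → ℝ) (hμ : ∀ u a, 0 ≤ μ u a ∧ μ u a ≤ 1)
    (δ : Fin k → ℕ) (hδ : ∀ a, δ a ≤ τ)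
    (hcz : ∀ u : Fin n, 0 ≤ P u * (τ : ℝ) - Real.sqrt ((τ : ℝ) * Real.log (τ : ℝ)))
    (Z : Finset (Fin k)) (hZ : ∑ a ∈ Z, δ a ≤ τ) :
    DOAlgR (muPlus μ) δ (cplus P τ) Z
      ≥ (∑ q : Fin τ → Fin n, (∏ t, P (q t)) * DOAlgR μ δ (typeCount τ q) Z)
        - (n : ℝ) * (Real.sqrt ((τ : ℝ) * Real.log (τ : ℝ)) + 2) := by
  classical
  have hne : Nonempty (Fin n) := ⟨⟨0, by omega⟩⟩
  set s : ℝ := Real.sqrt ((τ:ℝ) * Real.log (τ:ℝ)) with hs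
  have hτ0 : (0:ℝ) < τ := by
    have : (2:ℝ) ≤ τ := by exact_mod_cast hτ
    linarith
  have hs0 : 0 ≤ s := Real.sqrt_nonneg _
  have hbase_le : ∑ u, cplusBase P τ u ≤ τ := by
    have hr : (∑ u, (cplusBase P τ u : ℝ)) ≤ (τ:ℝ) := by
      calc ∑ u, (cplusBase P τ u:ℝ) ≤ ∑ u, (P u * τ - s) :=
            Finset.sum_le_sum fun u _ => Nat.floor_le (hcz u)
        _ ≤ ∑ u, P u * τ := Finset.sum_le_sum fun u _ => by linarith
        _ = (τ:ℝ) := by rw [← Finset.sum_mul, hPsum, one_mul]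
    exact_mod_cast hr
  have hterm1 : (τ:ℝ) - ∑ u, (cplusBase P τ u : ℝ) ≤ n * (s + 1) := by
    have hlt : ∑ u : Fin n, (P u * τ - s - 1) < ∑ u, (cplusBase P τ u : ℝ) :=
      Finset.sum_lt_sum_of_nonempty Finset.univ_nonempty
        fun u _ => Nat.sub_one_lt_floor _
    have hsum : ∑ u : Fin n, (P u * τ - s - 1) = (τ:ℝ) - n * (s+1) := by
      rw [Finset.sum_sub_distrib, Finset.sum_sub_distrib, ← Finset.sum_mul, hPsum]
      simp [Finset.card_univ]
      ring
    linarith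
  -- dichotomy
  have hlog_or : 1 ≤ Real.log (τ:ℝ) ∨ n = 1 := by
    by_cases hn1 : n = 1
    · exact Or.inr hn1
    · left
      have hn2 : 2 ≤ n := by omega
      have hτ3 : 3 ≤ τ := by
        by_contra hτ2'
        have hτ2 : τ = 2 := by omega
        subst hτ2
        have hsl : 1 < Real.sqrt ((2:ℝ) * Real.log 2) := by
          have he : Real.exp ((1:ℝ)/2) < 2 := by
            rw [show ((1:ℝ)/2) = (1:ℝ)/2 by norm_num, Real.exp_half]
            have h9 : Real.exp 1 < 4 := lt_trans Real.exp_one_lt_d9 (by norm_num)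
            calc Real.sqrt (Real.exp 1) < Real.sqrt 4 :=
                  Real.sqrt_lt_sqrt (Real.exp_pos _).le h9
              _ = 2 := by
                  rw [show (4:ℝ) = 2^2 by norm_num, Real.sqrt_sq (by norm_num)]
          have hl2 : (1:ℝ)/2 < Real.log 2 :=
            (Real.lt_log_iff_exp_lt (by norm_num)).mpr he
          rw [show (1:ℝ) = 1^2 by norm_num]
          exact Real.lt_sqrt_of_sq_lt (by nlinarith)
        have hss : s = Real.sqrt ((2:ℝ) * Real.log 2) := by rw [hs]; norm_num
        have h1 : ∀ w : Fin n, 1/2 < P w := by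
          intro w
          have h2 := hcz w
          push_cast at h2
          rw [hss] at h2
          linarith
        obtain ⟨u, v, huv⟩ : ∃ u v : Fin n, u ≠ v :=
          ⟨⟨0, by omega⟩, ⟨1, by omega⟩, by simp [Fin.ext_iff]⟩
        have hle : P u + P v ≤ 1 := by
          rw [← hPsum]
          calc P u + P v = ∑ w ∈ ({u,v} : Finset (Fin n)), P w :=
                (Finset.sum_pair huv).symm
            _ ≤ ∑ w, P w := Finset.sum_le_sum_of_subset_of_nonneg
                (Finset.subset_univ _) fun w _ _ => (hP w).le
        linarith [h1 u, h1 v]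
      have hexp3 : Real.exp 1 ≤ (τ:ℝ) := by
        have h1 : Real.exp 1 < 3 := lt_trans Real.exp_one_lt_d9 (by norm_num)
        have h2 : (3:ℝ) ≤ τ := by exact_mod_cast hτ3
        linarith
      exact (Real.le_log_iff_exp_le hτ0).mpr hexp3
  -- deficit bound for every type
  have hdef : ∀ u : Fin n, ∑ q : Fin τ → Fin n,
      (∏ t, P (q t)) * ((cplusBase P τ u - typeCount τ q u : ℕ):ℝ) ≤ 1 := by
    intro u
    rcases hlog_or with hlog | hn1
    · exact deficit_le_one hτ P hP hPsum hcz hlog u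
    · subst hn1
      have hPu : P u = 1 := by
        have h0 : P 0 = 1 := (Fin.sum_univ_one P).symm.trans hPsum
        rw [Subsingleton.elim u (0 : Fin 1)]
        exact h0
      have hAτ : cplusBase P τ u ≤ τ := by
        have h1 : (cplusBase P τ u : ℝ) ≤ P u * τ - s := Nat.floor_le (hcz u)
        rw [hPu, one_mul] at h1
        have h2 : (cplusBase P τ u : ℝ) ≤ (τ:ℝ) := by linarith
        exact_mod_cast h2
      have hzero : ∀ q : Fin τ → Fin 1,
          (∏ t, P (q t)) * ((cplusBase P τ u - typeCount τ q u : ℕ):ℝ) = 0 := by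
        intro q
        have hq : typeCount τ q u = τ := by
          rw [typeCount, Finset.filter_true_of_mem fun t _ => Subsingleton.elim _ _]
          simp
        rw [hq, Nat.sub_eq_zero_of_le hAτ]
        simp
      rw [Finset.sum_congr rfl fun q _ => hzero q, Finset.sum_const_zero]
      norm_num
  -- pointwise Lemma A
  have hq_le : ∀ q : Fin τ → Fin n, DOAlgR μ δ (typeCount τ q) Z
      ≤ DOAlgR (muPlus μ) δ (cplus P τ) Z
        + ∑ u, ((typeCount τ q u - cplusBase P τ u : ℕ):ℝ) :=
    fun q => doalg_le_cplus P μ δ Z hμ hbase_le (typeCount τ q) (typeCount_sum q)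
  -- expected penalty bound
  have hpen : ∑ q : Fin τ → Fin n, (∏ t, P (q t)) *
      ∑ u, ((typeCount τ q u - cplusBase P τ u : ℕ):ℝ) ≤ (n:ℝ) * (s + 2) := by
    have hsplitq : ∀ q : Fin τ → Fin n,
        ∑ u, ((typeCount τ q u - cplusBase P τ u : ℕ):ℝ)
        = ((τ:ℝ) - ∑ u, (cplusBase P τ u : ℝ))
          + ∑ u, ((cplusBase P τ u - typeCount τ q u : ℕ):ℝ) := by
      intro q
      have h1 : ∀ u : Fin n, ((typeCount τ q u - cplusBase P τ u : ℕ):ℝ)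
          = ((typeCount τ q u : ℝ) - (cplusBase P τ u:ℝ))
            + ((cplusBase P τ u - typeCount τ q u : ℕ):ℝ) := by
        intro u
        have h2 : (typeCount τ q u - cplusBase P τ u) + cplusBase P τ u
            = (cplusBase P τ u - typeCount τ q u) + typeCount τ q u := by omega
        have h3 : ((typeCount τ q u - cplusBase P τ u : ℕ):ℝ) + (cplusBase P τ u:ℝ)
            = ((cplusBase P τ u - typeCount τ q u : ℕ):ℝ) + (typeCount τ q u:ℝ) := by
          exact_mod_cast congrArg (fun m : ℕ => (m:ℝ)) h2
        linarith
      rw [Finset.sum_congr rfl fun u _ => h1 u, Finset.sum_add_distrib,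
        Finset.sum_sub_distrib]
      have h4 : ∑ u, (typeCount τ q u : ℝ) = (τ:ℝ) := by
        exact_mod_cast congrArg (fun m : ℕ => (m:ℝ)) (typeCount_sum q)
      rw [h4]
    calc ∑ q : Fin τ → Fin n, (∏ t, P (q t)) *
          ∑ u, ((typeCount τ q u - cplusBase P τ u : ℕ):ℝ)
        = ∑ q : Fin τ → Fin n, ((∏ t, P (q t)) *
            ((τ:ℝ) - ∑ u, (cplusBase P τ u : ℝ))
          + (∏ t, P (q t)) * ∑ u, ((cplusBase P τ u - typeCount τ q u : ℕ):ℝ)) :=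
          Finset.sum_congr rfl fun q _ => by rw [hsplitq q, mul_add]
      _ = ((τ:ℝ) - ∑ u, (cplusBase P τ u : ℝ))
          + ∑ u, ∑ q : Fin τ → Fin n, (∏ t, P (q t)) *
              ((cplusBase P τ u - typeCount τ q u : ℕ):ℝ) := by
          rw [Finset.sum_add_distrib, ← Finset.sum_mul, sum_w_one P hPsum, one_mul]
          congr 1
          rw [Finset.sum_congr rfl fun q _ => Finset.mul_sum _ _ _, Finset.sum_comm]
      _ ≤ (n:ℝ) * (s + 1) + ∑ u : Fin n, (1:ℝ) := by
          exact add_le_add hterm1 (Finset.sum_le_sum fun u _ => hdef u)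
      _ ≤ (n:ℝ) * (s + 2) := by
          simp [Finset.card_univ]
          ring_nf
          linarith
  -- final chain
  have hmain : ∑ q : Fin τ → Fin n, (∏ t, P (q t)) * DOAlgR μ δ (typeCount τ q) Z
      ≤ DOAlgR (muPlus μ) δ (cplus P τ) Z + (n:ℝ) * (s + 2) := by
    calc ∑ q : Fin τ → Fin n, (∏ t, P (q t)) * DOAlgR μ δ (typeCount τ q) Z
        ≤ ∑ q : Fin τ → Fin n, (∏ t, P (q t)) *
            (DOAlgR (muPlus μ) δ (cplus P τ) Z
              + ∑ u, ((typeCount τ q u - cplusBase P τ u : ℕ):ℝ)) :=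
          Finset.sum_le_sum fun q _ =>
            mul_le_mul_of_nonneg_left (hq_le q) (w_nonneg P hP q)
      _ = DOAlgR (muPlus μ) δ (cplus P τ) Z
          + ∑ q : Fin τ → Fin n, (∏ t, P (q t)) *
              ∑ u, ((typeCount τ q u - cplusBase P τ u : ℕ):ℝ) := by
          rw [Finset.sum_congr rfl fun q _ => mul_add _ _ _,
            Finset.sum_add_distrib, ← Finset.sum_mul, sum_w_one P hPsum, one_mul]
      _ ≤ DOAlgR (muPlus μ) δ (cplus P τ) Z + (n:ℝ) * (s + 2) := by linarith
  linarith

end ExposureBandits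
end

section
/- Let 𝒰 be a finite set and S = (S_1,…,S_k) a collection of subsets of 𝒰. Set τ = |𝒰|, δ_j = |S_j| for each j, and μ_{i,j} = 1 if i ∈ S_j and μ_{i,j} = 0 otherwise. Then 𝒰 has an exact cover from S (a subcollection S* ⊆ S of pairwise disjoint sets whose union is 𝒰) if and only if there exist X ∈ {0,1}^{𝒰×{1,…,k}} and Z ∈ {0,1}^k satisfying (a) Σ_{j=1}^k X_{i,j} = 1 for every i ∈ 𝒰, (b) Σ_{i∈𝒰} X_{i,j} ≥ δ_j·Z_j for every j, and (c) X_{i,j} ≤ Z_j for every i,j, such that Σ_{i∈𝒰} Σ_{j=1}^k μ_{i,j}·X_{i,j} = τ. -/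
open scoped BigOperators Classical

namespace ExposureBandits


/-- The reduction underlying Proposition 6 of the paper: `𝒰` has an exact cover from
`S_1, …, S_k` iff the planning problem with `τ = |𝒰|`, `δ_j = |S_j|` and
`μ_{i,j} = 1[i ∈ S_j]` has a feasible solution of value `τ`. -/
theorem exact_cover_iff_planning_value
    (U : Type) [Fintype U] [DecidableEq U] (k : ℕ) (S : Fin k → Finset U) :
    (∃ I : Finset (Fin k),
        (∀ i ∈ I, ∀ j ∈ I, i ≠ j → Disjoint (S i) (S j)) ∧
        I.biUnion S = Finset.univ) ↔
    (∃ (X : U → Fin k → ℕ) (Z : Fin k → ℕ),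
        (∀ i j, X i j ≤ 1) ∧ (∀ j, Z j ≤ 1) ∧
        (∀ i : U, ∑ j, X i j = 1) ∧
        (∀ j, (S j).card * Z j ≤ ∑ i : U, X i j) ∧
        (∀ i j, X i j ≤ Z j) ∧
        (∑ i : U, ∑ j, (if i ∈ S j then 1 else 0) * X i j) = Fintype.card U) := by
  constructor
  · rintro ⟨I, hdisj, hcov⟩
    -- choice function
    have hex : ∀ i : U, ∃ j, j ∈ I ∧ i ∈ S j := by
      intro i
      have : i ∈ I.biUnion S := by rw [hcov]; exact Finset.mem_univ i
      simpa [Finset.mem_biUnion] using this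
    choose f hfI hfS using hex
    refine ⟨fun i j => if j = f i then 1 else 0, fun j => if j ∈ I then 1 else 0,
      ?_, ?_, ?_, ?_, ?_, ?_⟩
    · intro i j; dsimp only; split <;> simp
    · intro j; dsimp only; split <;> simp
    · intro i; simp
    · intro j
      by_cases hj : j ∈ I
      · have hsub : S j ⊆ Finset.univ.filter (fun i => j = f i) := by
          intro i hi
          simp only [Finset.mem_filter, Finset.mem_univ, true_and]
          by_contra hne
          have := hdisj j hj (f i) (hfI i) hne
          exact (Finset.disjoint_left.mp this hi) (hfS i)
        calc (S j).card * (if j ∈ I then 1 else 0) ≤ (S j).card := by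
              split <;> simp
          _ ≤ (Finset.univ.filter (fun i => j = f i)).card := Finset.card_le_card hsub
          _ = ∑ i : U, (if j = f i then 1 else 0) := by
              simp [Finset.sum_boole]
      · simp [hj]
    · intro i j
      by_cases h : j = f i
      · subst h; simp [hfI i]
      · simp [h]
    · have : ∀ i : U, (∑ j, (if i ∈ S j then 1 else 0) * (if j = f i then 1 else 0)) = 1 := by
        intro i
        rw [Finset.sum_eq_single (f i)]
        · simp [hfS i]
        · intro b _ hb; simp [hb]
        · simp
      simp [this, Finset.card_univ, hfS]
  · rintro ⟨X, Z, hX1, hZ1, hrow, hcol, hXZ, hval⟩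
    -- X i j = 1 only if i ∈ S j
    have key : ∀ i j, (if i ∈ S j then 1 else 0) * X i j = X i j := by
      have h1 : ∑ i : U, ∑ j, (if i ∈ S j then 1 else 0) * X i j
          = ∑ i : U, ∑ j, X i j := by
        rw [hval]
        have : ∀ i : U, ∑ j, X i j = 1 := hrow
        simp [this, Finset.card_univ]
      have hle : ∀ i ∈ (Finset.univ : Finset U),
          (∑ j, (if i ∈ S j then 1 else 0) * X i j) ≤ ∑ j, X i j := by
        intro i _
        apply Finset.sum_le_sum
        intro j _
        split <;> simp
      have h2 := (Finset.sum_eq_sum_iff_of_le hle).mp h1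
      intro i j
      have h3 := h2 i (Finset.mem_univ i)
      have hle2 : ∀ j ∈ (Finset.univ : Finset (Fin k)),
          (if i ∈ S j then 1 else 0) * X i j ≤ X i j := by
        intro j _; split <;> simp
      exact (Finset.sum_eq_sum_iff_of_le hle2).mp h3 j (Finset.mem_univ j)
    have hmem : ∀ i j, X i j = 1 → i ∈ S j := by
      intro i j h
      by_contra hns
      have := key i j
      simp [hns, h] at this
    -- for j with Z j = 1, X i j = 1 for all i ∈ S j
    have hfull : ∀ j, Z j = 1 → ∀ i ∈ S j, X i j = 1 := by
      intro j hz
      have hcsum : ∑ i : U, X i j = ∑ i ∈ S j, X i j := by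
        rw [← Finset.sum_subset (Finset.subset_univ (S j))]
        intro i _ hi
        by_contra h0
        have hx1 : X i j = 1 := Nat.le_antisymm (hX1 i j) (Nat.one_le_iff_ne_zero.mpr h0)
        exact hi (hmem i j hx1)
      have hub : ∑ i ∈ S j, X i j ≤ (S j).card := by
        calc ∑ i ∈ S j, X i j ≤ ∑ i ∈ S j, 1 := Finset.sum_le_sum (fun i _ => hX1 i j)
          _ = (S j).card := by simp
      have hlb : (S j).card ≤ ∑ i ∈ S j, X i j := by
        have := hcol j
        rw [hz, mul_one, hcsum] at this
        exact this
      have heq : ∑ i ∈ S j, X i j = ∑ i ∈ S j, 1 := by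
        simp; omega
      have := (Finset.sum_eq_sum_iff_of_le (fun i _ => hX1 i j)).mp heq
      intro i hi
      exact this i hi
    refine ⟨Finset.univ.filter (fun j => Z j = 1), ?_, ?_⟩
    · intro j hj j' hj' hne
      simp only [Finset.mem_filter] at hj hj'
      rw [Finset.disjoint_left]
      intro i hi hi'
      have h1 : X i j = 1 := hfull j hj.2 i hi
      have h2 : X i j' = 1 := hfull j' hj'.2 i hi'
      have : ({j, j'} : Finset (Fin k)).sum (X i) ≤ ∑ j, X i j :=
        Finset.sum_le_sum_of_subset (Finset.subset_univ _)
      rw [Finset.sum_pair hne, h1, h2, hrow i] at this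
      omega
    · apply Finset.eq_univ_of_forall
      intro i
      have h1 : ∑ j, X i j ≠ 0 := by rw [hrow i]; omega
      obtain ⟨j, _, hj⟩ := Finset.exists_ne_zero_of_sum_ne_zero h1
      have hx1 : X i j = 1 := Nat.le_antisymm (hX1 i j) (Nat.one_le_iff_ne_zero.mpr hj)
      have hz1 : Z j = 1 := Nat.le_antisymm (hZ1 j) (hx1 ▸ hXZ i j)
      exact Finset.mem_biUnion.mpr ⟨j, by simp [hz1], hmem i j hx1⟩

end ExposureBandits
end

section
/- Let P = (P_1,…,P_n) and P̂ = (P̂_1,…,P̂_n) be probability vectors with |P_u − P̂_u| ≤ ε for every u. Define f_P : [0,1) → {1,…,n} by f_P(x) = u iff x ∈ [Σ_{i<u} P_i, Σ_{i≤u} P_i), and f_{P̂} analogously. Then the Lebesgue measure of { x ∈ [0,1) : f_P(x) ≠ f_{P̂}(x) } is at most ε·n². -/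
open scoped BigOperators Classical

namespace ExposureBandits

private lemma sum_odds (m : ℕ) : ∑ u ∈ Finset.range m, (2 * u + 1) = m ^ 2 := by
  induction m with
  | zero => simp
  | succ k ih => rw [Finset.sum_range_succ, ih]; ring

/-- Observation 3 of the paper: the inverse-CDF classifiers of two probability vectors that are
entrywise `ε`-close disagree on a set of Lebesgue measure at most `ε·n²`. -/
theorem cdf_classifiers_close
    (n : ℕ) (hn : 1 ≤ n) (ε : ℝ) (hε : 0 ≤ ε)
    (P Q : Fin n → ℝ)
    (hP0 : ∀ u, 0 ≤ P u) (hQ0 : ∀ u, 0 ≤ Q u)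
    (hP1 : ∑ u, P u = 1) (hQ1 : ∑ u, Q u = 1)
    (hclose : ∀ u, |P u - Q u| ≤ ε)
    (fP fQ : ℝ → Fin n)
    (hfP : ∀ x ∈ Set.Ico (0 : ℝ) 1,
      (∑ i ∈ Finset.univ.filter (fun i => i < fP x), P i) ≤ x ∧
        x < ∑ i ∈ Finset.univ.filter (fun i => i ≤ fP x), P i)
    (hfQ : ∀ x ∈ Set.Ico (0 : ℝ) 1,
      (∑ i ∈ Finset.univ.filter (fun i => i < fQ x), Q i) ≤ x ∧
        x < ∑ i ∈ Finset.univ.filter (fun i => i ≤ fQ x), Q i) :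
    MeasureTheory.volume {x : ℝ | x ∈ Set.Ico (0 : ℝ) 1 ∧ fP x ≠ fQ x}
      ≤ ENNReal.ofReal (ε * (n : ℝ) ^ 2) := by
  classical
  set A : Fin n → ℝ := fun u => ∑ i ∈ Finset.univ.filter (fun i => i < u), P i with hA
  set B : Fin n → ℝ := fun u => ∑ i ∈ Finset.univ.filter (fun i => i ≤ u), P i with hB
  set C : Fin n → ℝ := fun u => ∑ i ∈ Finset.univ.filter (fun i => i < u), Q i with hC
  set D : Fin n → ℝ := fun u => ∑ i ∈ Finset.univ.filter (fun i => i ≤ u), Q i with hD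
  have hfP' : ∀ x ∈ Set.Ico (0 : ℝ) 1, A (fP x) ≤ x ∧ x < B (fP x) := hfP
  have hfQ' : ∀ x ∈ Set.Ico (0 : ℝ) 1, C (fQ x) ≤ x ∧ x < D (fQ x) := hfQ
  -- cardinalities
  have hcard_lt : ∀ u : Fin n, (Finset.univ.filter (fun i => i < u)).card = (u : ℕ) := by
    intro u
    have : Finset.univ.filter (fun i => i < u) = Finset.Iio u := by ext i; simp
    rw [this, Fin.card_Iio]
  have hcard_le : ∀ u : Fin n, (Finset.univ.filter (fun i => i ≤ u)).card = (u : ℕ) + 1 := by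
    intro u
    have : Finset.univ.filter (fun i => i ≤ u) = Finset.Iic u := by ext i; simp
    rw [this, Fin.card_Iic]
  -- closeness of partial sums
  have habs : ∀ (s : Finset (Fin n)),
      |(∑ i ∈ s, P i) - ∑ i ∈ s, Q i| ≤ (s.card : ℝ) * ε := by
    intro s
    rw [← Finset.sum_sub_distrib]
    calc |∑ i ∈ s, (P i - Q i)| ≤ ∑ i ∈ s, |P i - Q i| := Finset.abs_sum_le_sum_abs _ _
      _ ≤ ∑ _i ∈ s, ε := Finset.sum_le_sum fun i _ => hclose i
      _ = (s.card : ℝ) * ε := by rw [Finset.sum_const, nsmul_eq_mul]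
  have hAC : ∀ u, |A u - C u| ≤ (u : ℕ) * ε := by
    intro u
    simpa [hA, hC, hcard_lt u] using habs (Finset.univ.filter (fun i => i < u))
  have hBD : ∀ u, |B u - D u| ≤ ((u : ℕ) + 1) * ε := by
    intro u
    have := habs (Finset.univ.filter (fun i => i ≤ u))
    rw [hcard_le u] at this
    simpa [hA, hB, hC, hD] using this
  -- Q-intervals are "disjoint": if x lies in [C u, D u) then fQ x = u
  have hQdet : ∀ u : Fin n, ∀ x ∈ Set.Ico (0 : ℝ) 1, C u ≤ x → x < D u → fQ x = u := by
    intro u x hx h1 h2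
    by_contra hne
    obtain ⟨h3, h4⟩ := hfQ' x hx
    rcases lt_or_gt_of_ne hne with hlt | hgt
    · -- fQ x < u, so D (fQ x) ≤ C u
      have hsub : Finset.univ.filter (fun i => i ≤ fQ x) ⊆
          Finset.univ.filter (fun i => i < u) := by
        intro i hi
        simp only [Finset.mem_filter, Finset.mem_univ, true_and] at hi ⊢
        exact lt_of_le_of_lt hi hlt
      have : D (fQ x) ≤ C u :=
        Finset.sum_le_sum_of_subset_of_nonneg hsub (fun i _ _ => hQ0 i)
      linarith
    · -- u < fQ x, so D u ≤ C (fQ x)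
      have hsub : Finset.univ.filter (fun i => i ≤ u) ⊆
          Finset.univ.filter (fun i => i < fQ x) := by
        intro i hi
        simp only [Finset.mem_filter, Finset.mem_univ, true_and] at hi ⊢
        exact lt_of_le_of_lt hi hgt
      have : D u ≤ C (fQ x) :=
        Finset.sum_le_sum_of_subset_of_nonneg hsub (fun i _ _ => hQ0 i)
      linarith
  -- the disagreement set, split by the value of fP
  set S : Fin n → Set ℝ :=
    fun u => {x : ℝ | x ∈ Set.Ico (0 : ℝ) 1 ∧ fP x = u ∧ fQ x ≠ u} with hS
  have hcover : {x : ℝ | x ∈ Set.Ico (0 : ℝ) 1 ∧ fP x ≠ fQ x} ⊆ ⋃ u, S u := by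
    intro x hx
    obtain ⟨hx1, hx2⟩ := hx
    exact Set.mem_iUnion.mpr ⟨fP x, hx1, rfl, fun h => hx2 h.symm⟩
  have hSsub : ∀ u, S u ⊆
      Set.Ico (A u) (min (B u) (C u)) ∪ Set.Ico (max (A u) (D u)) (B u) := by
    intro u x hx
    obtain ⟨hx01, hfPx, hfQx⟩ := hx
    obtain ⟨h1, h2⟩ := hfP' x hx01
    rw [hfPx] at h1 h2
    have hnot : ¬ (C u ≤ x ∧ x < D u) := fun ⟨hc, hd⟩ => hfQx (hQdet u x hx01 hc hd)
    rcases not_and_or.mp hnot with hc | hd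
    · left
      exact ⟨h1, lt_min h2 (lt_of_not_ge hc)⟩
    · right
      exact ⟨max_le h1 (le_of_not_gt hd), h2⟩
  -- measure of each piece
  have hvol : ∀ u : Fin n,
      MeasureTheory.volume (S u) ≤ ENNReal.ofReal (((u : ℕ) * ε) + ((u : ℕ) + 1) * ε) := by
    intro u
    calc MeasureTheory.volume (S u)
        ≤ MeasureTheory.volume
            (Set.Ico (A u) (min (B u) (C u)) ∪ Set.Ico (max (A u) (D u)) (B u)) :=
          MeasureTheory.measure_mono (hSsub u)
      _ ≤ MeasureTheory.volume (Set.Ico (A u) (min (B u) (C u)))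
            + MeasureTheory.volume (Set.Ico (max (A u) (D u)) (B u)) :=
          MeasureTheory.measure_union_le _ _
      _ = ENNReal.ofReal (min (B u) (C u) - A u)
            + ENNReal.ofReal (B u - max (A u) (D u)) := by
          rw [Real.volume_Ico, Real.volume_Ico]
      _ ≤ ENNReal.ofReal ((u : ℕ) * ε) + ENNReal.ofReal (((u : ℕ) + 1) * ε) := by
          gcongr
          · have h1 : min (B u) (C u) - A u ≤ C u - A u := by
              have := min_le_right (B u) (C u); linarith
            have h2 : C u - A u ≤ |A u - C u| := by
              rw [abs_sub_comm]; exact le_abs_self _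
            linarith [hAC u]
          · have h1 : B u - max (A u) (D u) ≤ B u - D u := by
              have := le_max_right (A u) (D u); linarith
            have h2 : B u - D u ≤ |B u - D u| := le_abs_self _
            linarith [hBD u]
      _ = ENNReal.ofReal (((u : ℕ) * ε) + ((u : ℕ) + 1) * ε) := by
          rw [ENNReal.ofReal_add (by positivity) (by positivity)]
  -- put it together
  calc MeasureTheory.volume {x : ℝ | x ∈ Set.Ico (0 : ℝ) 1 ∧ fP x ≠ fQ x}
      ≤ MeasureTheory.volume (⋃ u, S u) := MeasureTheory.measure_mono hcover
    _ ≤ ∑ u, MeasureTheory.volume (S u) := MeasureTheory.measure_iUnion_fintype_le _ _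
    _ ≤ ∑ u : Fin n, ENNReal.ofReal (((u : ℕ) * ε) + ((u : ℕ) + 1) * ε) :=
        Finset.sum_le_sum fun u _ => hvol u
    _ = ENNReal.ofReal (∑ u : Fin n, (((u : ℕ) * ε) + ((u : ℕ) + 1) * ε)) := by
        rw [ENNReal.ofReal_sum_of_nonneg]
        intro u _
        positivity
    _ = ENNReal.ofReal (ε * (n : ℝ) ^ 2) := by
        congr 1
        have : ∑ u : Fin n, (((u : ℕ) * ε) + ((u : ℕ) + 1) * ε)
            = ∑ u ∈ Finset.range n, ((2 * (u : ℝ) + 1) * ε) := by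
          rw [Finset.sum_range fun i => (2 * (i : ℝ) + 1) * ε]
          exact Finset.sum_congr rfl fun u _ => by ring
        rw [this, ← Finset.sum_mul]
        have hnat := sum_odds n
        have : ∑ u ∈ Finset.range n, (2 * (u : ℝ) + 1) = (n : ℝ) ^ 2 := by
          have := congrArg (fun k : ℕ => (k : ℝ)) hnat
          push_cast at this
          simpa using this
        rw [this]; ring

end ExposureBandits
end

section
/- Let m ≥ 1 be an integer and 0 < ε < 1/2 with ε·√m ≤ 1/2. For b ∈ {0,1}, let ℙ_b be the product measure on {0,1}^m of m i.i.d. Bernoulli random variables with mean 1/2 when b = 0 and mean (1+ε)/2 when b = 1. Then there is no decision rule r : {0,1}^m → {0,1} satisfying both ℙ_0[r = 0] ≥ 3/4 and ℙ_1[r = 1] ≥ 3/4. -/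
open scoped BigOperators Classical

namespace ExposureBandits


/-- Probability of the outcome sequence `v` under `m` i.i.d. coins of bias `p`. -/
noncomputable def coinProb (m : ℕ) (p : ℝ) (v : Fin m → Bool) : ℝ :=
  ∏ t : Fin m, if v t then p else 1 - p

lemma sum_prod_bool (m : ℕ) (h : Bool → ℝ) :
    ∑ v : Fin m → Bool, ∏ t, h (v t) = (h false + h true) ^ m := by
  rw [← Fintype.sum_pow h m]
  simp [add_comm]

/-- Lemma 3 of the paper: if `ε·√m ≤ 1/2`, no decision rule can distinguish `m` i.i.d. fair
coins from `m` i.i.d. coins of mean `(1+ε)/2` with success probability `3/4` on both. -/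
theorem cannot_distinguish_coins
    (m : ℕ) (hm : 1 ≤ m) (ε : ℝ) (hε0 : 0 < ε) (hε1 : ε < 1 / 2)
    (hεm : ε * Real.sqrt (m : ℝ) ≤ 1 / 2)
    (r : (Fin m → Bool) → Bool) :
    ¬ ((∑ v ∈ Finset.univ.filter (fun v : Fin m → Bool => r v = false),
          coinProb m (1 / 2) v) ≥ 3 / 4 ∧
       (∑ v ∈ Finset.univ.filter (fun v : Fin m → Bool => r v = true),
          coinProb m ((1 + ε) / 2) v) ≥ 3 / 4) := by
  rintro ⟨h1, h2⟩
  set P : (Fin m → Bool) → ℝ := coinProb m (1 / 2) with hP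
  set Q : (Fin m → Bool) → ℝ := coinProb m ((1 + ε) / 2) with hQ
  -- P is uniform
  have hPv : ∀ v, P v = (1 / 2 : ℝ) ^ m := by
    intro v
    have h : ∀ t ∈ Finset.univ, (if v t then (1 : ℝ) / 2 else 1 - 1 / 2) = 1 / 2 := by
      intro t _; cases v t <;> norm_num
    rw [hP]
    unfold coinProb
    rw [Finset.prod_congr rfl h, Finset.prod_const]
    simp
  -- total mass of Q is 1
  have hQ1 : ∑ v : Fin m → Bool, Q v = 1 := by
    have := sum_prod_bool m (fun b => if b then (1 + ε) / 2 else 1 - (1 + ε) / 2)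
    simp only [hQ, coinProb]
    rw [this]
    norm_num
  -- sum of Q squared
  have hQ2 : ∑ v : Fin m → Bool, (Q v) ^ 2 = ((1 + ε ^ 2) / 2) ^ m := by
    have hsq : ∀ v : Fin m → Bool, (Q v) ^ 2
        = ∏ t, (fun b => (if b then (1 + ε) / 2 else 1 - (1 + ε) / 2) ^ 2) (v t) := by
      intro v
      simp only [hQ, coinProb, ← Finset.prod_pow]
    rw [Finset.sum_congr rfl fun v _ => hsq v,
      sum_prod_bool m (fun b => (if b then (1 + ε) / 2 else 1 - (1 + ε) / 2) ^ 2)]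
    norm_num
    congr 1
    ring
  -- total mass of P is 1
  have hP1 : ∑ v : Fin m → Bool, P v = 1 := by
    rw [Finset.sum_congr rfl fun v _ => hPv v]
    rw [Finset.sum_const, Finset.card_univ, nsmul_eq_mul]
    simp only [Fintype.card_fun, Fintype.card_bool, Fintype.card_fin]
    push_cast
    rw [← mul_pow]
    norm_num
  -- splitting sums
  have hsplit : ∀ f : (Fin m → Bool) → ℝ,
      ∑ v ∈ Finset.univ.filter (fun v => r v = false), f v
        + ∑ v ∈ Finset.univ.filter (fun v => r v = true), f v
      = ∑ v : Fin m → Bool, f v := by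
    intro f
    rw [← Finset.sum_filter_add_sum_filter_not Finset.univ (fun v => r v = false) f]
    simp
  have hPA : ∑ v ∈ Finset.univ.filter (fun v => r v = true), P v ≤ 1 / 4 := by
    have := hsplit P; rw [hP1] at this; linarith
  have hQB : ∑ v ∈ Finset.univ.filter (fun v => r v = false), Q v ≤ 1 / 4 := by
    have := hsplit Q; rw [hQ1] at this; linarith
  -- lower bound on L1 distance
  set T : ℝ := ∑ v : Fin m → Bool, |Q v - P v| with hT
  have hT1 : 1 ≤ T := by
    have hs := hsplit (fun v => |Q v - P v|)
    have hb : ∑ v ∈ Finset.univ.filter (fun v => r v = false), (P v - Q v)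
        ≤ ∑ v ∈ Finset.univ.filter (fun v => r v = false), |Q v - P v| := by
      apply Finset.sum_le_sum
      intro v _
      rw [abs_sub_comm]
      exact le_abs_self _
    have ha : ∑ v ∈ Finset.univ.filter (fun v => r v = true), (Q v - P v)
        ≤ ∑ v ∈ Finset.univ.filter (fun v => r v = true), |Q v - P v| := by
      apply Finset.sum_le_sum
      intro v _
      exact le_abs_self _
    rw [Finset.sum_sub_distrib] at hb ha
    simp only [hT]
    linarith [hs]
  -- Cauchy-Schwarz
  have hCS : T ^ 2 ≤ (∑ v : Fin m → Bool, (Q v - P v) ^ 2) * 2 ^ m := by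
    have := Finset.sum_mul_sq_le_sq_mul_sq Finset.univ
      (fun v : Fin m → Bool => |Q v - P v|) (fun _ => (1 : ℝ))
    simp only [mul_one, one_pow, sq_abs, Finset.sum_const, Finset.card_univ, nsmul_eq_mul,
      mul_one] at this
    calc T ^ 2 ≤ (∑ v : Fin m → Bool, (Q v - P v) ^ 2) * (Fintype.card (Fin m → Bool)) := this
      _ = (∑ v : Fin m → Bool, (Q v - P v) ^ 2) * 2 ^ m := by
          simp [Fintype.card_fun]
  -- chi-square computation
  have hchi : (∑ v : Fin m → Bool, (Q v - P v) ^ 2) * 2 ^ m = (1 + ε ^ 2) ^ m - 1 := by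
    have expand : ∀ v : Fin m → Bool,
        (Q v - P v) ^ 2 = Q v ^ 2 - 2 * (1 / 2 : ℝ) ^ m * Q v + ((1 / 2 : ℝ) ^ m) ^ 2 := by
      intro v; rw [hPv v]; ring
    rw [Finset.sum_congr rfl fun v _ => expand v]
    rw [Finset.sum_add_distrib, Finset.sum_sub_distrib, hQ2, ← Finset.mul_sum, hQ1,
      Finset.sum_const, Finset.card_univ]
    have hcard : (Fintype.card (Fin m → Bool)) = 2 ^ m := by simp [Fintype.card_fun]
    rw [nsmul_eq_mul, hcard]
    have e1 : ((1 + ε ^ 2) / 2) ^ m * (2 : ℝ) ^ m = (1 + ε ^ 2) ^ m := by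
      rw [← mul_pow]; ring_nf
    have e2 : ((1 / 2 : ℝ) ^ m) * (2 : ℝ) ^ m = 1 := by
      rw [← mul_pow]; norm_num
    have e3 : ((1 / 2 : ℝ) ^ m) ^ 2 * (2 : ℝ) ^ m * (2 : ℝ) ^ m = 1 := by
      rw [show ((1 / 2 : ℝ) ^ m) ^ 2 * (2 : ℝ) ^ m * (2 : ℝ) ^ m
        = ((1 / 2 : ℝ) ^ m * 2 ^ m) ^ 2 from by ring, e2, one_pow]
    push_cast
    calc (((1 + ε ^ 2) / 2) ^ m - 2 * (1 / 2 : ℝ) ^ m * 1 + (2:ℝ) ^ m * ((1 / 2 : ℝ) ^ m) ^ 2)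
          * 2 ^ m
        = ((1 + ε ^ 2) / 2) ^ m * 2 ^ m - 2 * ((1 / 2 : ℝ) ^ m * 2 ^ m)
          + ((1 / 2 : ℝ) ^ m) ^ 2 * 2 ^ m * 2 ^ m := by ring
      _ = (1 + ε ^ 2) ^ m - 1 := by rw [e1, e2, e3]; ring
  -- upper bound on (1+ε²)^m
  have hme : (m : ℝ) * ε ^ 2 ≤ 1 / 4 := by
    have h0 : (0 : ℝ) ≤ ε * Real.sqrt m := by positivity
    have := mul_self_le_mul_self h0 hεm
    have hs : Real.sqrt (m : ℝ) * Real.sqrt (m : ℝ) = (m : ℝ) :=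
      Real.mul_self_sqrt (by positivity)
    nlinarith [hs]
  have hpow : (1 + ε ^ 2) ^ m < 2 := by
    have h1 : (1 + ε ^ 2) ^ m ≤ Real.exp (ε ^ 2) ^ m := by
      apply pow_le_pow_left₀ (by positivity)
      linarith [Real.add_one_le_exp (ε ^ 2)]
    have h2 : Real.exp (ε ^ 2) ^ m = Real.exp ((m : ℝ) * ε ^ 2) := by
      rw [← Real.exp_nat_mul]
    have h3 : Real.exp ((m : ℝ) * ε ^ 2) ≤ Real.exp (1 / 4) := Real.exp_le_exp.2 hme
    have h4 : Real.exp (1 / 4) < 2 := by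
      have h5 : Real.exp (1 / 4) ^ 4 = Real.exp 1 := by
        rw [← Real.exp_nat_mul]; norm_num
      have h6 : Real.exp (1 / 4) ^ 4 < 2 ^ 4 := by
        rw [h5]; nlinarith [Real.exp_one_lt_d9]
      exact lt_of_pow_lt_pow_left₀ 4 (by norm_num) h6
    calc (1 + ε ^ 2) ^ m ≤ Real.exp (ε ^ 2) ^ m := h1
      _ = Real.exp ((m : ℝ) * ε ^ 2) := h2
      _ ≤ Real.exp (1 / 4) := h3
      _ < 2 := h4
  nlinarith [hCS, hchi, hT1, hpow]

end ExposureBandits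
end
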